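/- arXiv:2507.08525 — 6 statements merged into one kernel-verified Lean document; each statement's English description precedes it below -/
import Mathlib

section
/- Let M be an m×n matrix with rational entries. Call a nonzero vector z ∈ ℤ^n M-minimal if there is no nonzero h ∈ ℤ^n with h ≠ z such that h ⊑ z and M·h ⊑ M·z. Then every nonzero z ∈ ℤ^n can be written as z = Σ_ℓ α_ℓ g_ℓ, a finite sum where each α_ℓ is a positive integer and each g_ℓ is a nonzero M-minimal vector of ℤ^n satisfying g_ℓ ⊑ z and M·g_ℓ ⊑ M·z. -/
open Matrix

/-- `a ⊑ b` (conformality): componentwise, `a i` and `b i` have the same sign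
(their product is nonnegative) and `|a i| ≤ |b i|`. -/
def IsConformal {ι : Type*} {R : Type*} [Ring R] [LinearOrder R] [IsStrictOrderedRing R] (a b : ι → R) : Prop :=
  ∀ i, 0 ≤ a i * b i ∧ |a i| ≤ |b i|

/-- A nonzero integer vector `z` is `M`-minimal if there is no nonzero `h ≠ z`
with `h ⊑ z` and `M·h ⊑ M·z`. -/
def MMinimal {m n : ℕ} (M : Matrix (Fin m) (Fin n) ℚ) (z : Fin n → ℤ) : Prop :=
  ¬ ∃ h : Fin n → ℤ, h ≠ 0 ∧ h ≠ z ∧ IsConformal h z ∧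
      IsConformal (M.mulVec fun j => ((h j : ℚ))) (M.mulVec fun j => ((z j : ℚ)))

lemma conf_signs {R : Type*} [Ring R] [LinearOrder R] [IsStrictOrderedRing R] {a b : R}
    (h1 : 0 ≤ a * b) (h2 : |a| ≤ |b|) : (0 ≤ a ∧ a ≤ b) ∨ (a ≤ 0 ∧ b ≤ a) := by
  rcases le_or_gt 0 b with hb | hb
  · left
    have ha : 0 ≤ a := by
      by_contra ha
      push_neg at ha
      rcases hb.lt_or_eq with hb' | hb'
      · exact absurd h1 (not_le.mpr (mul_neg_of_neg_of_pos ha hb'))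
      · rw [abs_of_neg ha, ← hb', abs_zero, neg_nonpos] at h2
        exact absurd h2 (not_le.mpr ha)
    refine ⟨ha, ?_⟩
    rwa [abs_of_nonneg ha, abs_of_nonneg hb] at h2
  · right
    have ha : a ≤ 0 := by
      by_contra ha
      push_neg at ha
      exact absurd h1 (not_le.mpr (mul_neg_of_pos_of_neg ha hb))
    refine ⟨ha, ?_⟩
    rw [abs_of_nonpos ha, abs_of_neg hb, neg_le_neg_iff] at h2
    exact h2

lemma conformal_refl {ι : Type*} {R : Type*} [Ring R] [LinearOrder R] [IsStrictOrderedRing R] (a : ι → R) :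
    IsConformal a a := fun _ => ⟨mul_self_nonneg _, le_refl _⟩

lemma conformal_sub {ι : Type*} {R : Type*} [Ring R] [LinearOrder R] [IsStrictOrderedRing R] {a b : ι → R}
    (h : IsConformal a b) : IsConformal (b - a) b := by
  intro i
  have hsub : (b - a) i = b i - a i := rfl
  rcases conf_signs (h i).1 (h i).2 with ⟨h1, h2⟩ | ⟨h1, h2⟩
  · refine ⟨?_, ?_⟩
    · rw [hsub]
      exact mul_nonneg (sub_nonneg.mpr h2) (h1.trans h2)
    · rw [hsub, abs_of_nonneg (sub_nonneg.mpr h2), abs_of_nonneg (h1.trans h2)]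
      exact sub_le_self _ h1
  · refine ⟨?_, ?_⟩
    · rw [hsub]
      exact mul_nonneg_of_nonpos_of_nonpos (sub_nonpos.mpr h2) (h2.trans h1)
    · rw [hsub, abs_of_nonpos (sub_nonpos.mpr h2), abs_of_nonpos (h2.trans h1),
        neg_sub, neg_eq_zero_sub, sub_le_sub_iff_right]
      exact h1

lemma conformal_trans {ι : Type*} {R : Type*} [Ring R] [LinearOrder R] [IsStrictOrderedRing R] {a b c : ι → R}
    (hab : IsConformal a b) (hbc : IsConformal b c) : IsConformal a c := by
  intro i
  refine ⟨?_, (hab i).2.trans (hbc i).2⟩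
  rcases conf_signs (hab i).1 (hab i).2 with ⟨h1, h2⟩ | ⟨h1, h2⟩ <;>
    rcases conf_signs (hbc i).1 (hbc i).2 with ⟨h3, h4⟩ | ⟨h3, h4⟩
  · exact mul_nonneg h1 (h3.trans h4)
  · have : a i = 0 := le_antisymm (h2.trans h3) h1
    simp [this]
  · have : a i = 0 := le_antisymm h1 (h3.trans h2)
    simp [this]
  · exact mul_nonneg_of_nonpos_of_nonpos h1 ((h4.trans h2).trans h1)

/-- every nonzero `z ∈ ℤ^n` is a finite positive-integer combination of
nonzero `M`-minimal vectors `g_ℓ` with `g_ℓ ⊑ z` and `M·g_ℓ ⊑ M·z`. -/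
theorem conformal_decomposition_into_minimal_vectors (m n : ℕ)
    (M : Matrix (Fin m) (Fin n) ℚ) (z : Fin n → ℤ) (hz : z ≠ 0) :
    ∃ (k : ℕ) (α : Fin k → ℕ) (g : Fin k → (Fin n → ℤ)),
      (∀ ℓ, 0 < α ℓ) ∧
      (∀ ℓ, g ℓ ≠ 0 ∧ MMinimal M (g ℓ) ∧ IsConformal (g ℓ) z ∧
        IsConformal (M.mulVec fun j => ((g ℓ j : ℚ))) (M.mulVec fun j => ((z j : ℚ)))) ∧
      z = ∑ ℓ, (α ℓ : ℤ) • g ℓ := by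
  -- strong induction on the ℓ¹-norm
  suffices H : ∀ N : ℕ, ∀ z : Fin n → ℤ, z ≠ 0 → (∑ i, (z i).natAbs) ≤ N →
    ∃ (k : ℕ) (α : Fin k → ℕ) (g : Fin k → (Fin n → ℤ)),
      (∀ ℓ, 0 < α ℓ) ∧
      (∀ ℓ, g ℓ ≠ 0 ∧ MMinimal M (g ℓ) ∧ IsConformal (g ℓ) z ∧
        IsConformal (M.mulVec fun j => ((g ℓ j : ℚ))) (M.mulVec fun j => ((z j : ℚ)))) ∧
      z = ∑ ℓ, (α ℓ : ℤ) • g ℓ by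
    exact H _ z hz le_rfl
  intro N
  induction N with
  | zero =>
    intro z hz hle
    exfalso
    apply hz
    funext i
    have hz0 : ∑ i, (z i).natAbs = 0 := Nat.le_zero.mp hle
    have := (Finset.sum_eq_zero_iff.mp hz0) i (Finset.mem_univ i)
    simpa using Int.natAbs_eq_zero.mp this
  | succ N ih =>
    intro z hz hle
    by_cases hmin : MMinimal M z
    · refine ⟨1, fun _ => 1, fun _ => z, fun _ => one_pos,
        fun _ => ⟨hz, hmin, conformal_refl z, conformal_refl _⟩, ?_⟩
      simp
    · rw [MMinimal] at hmin
      push_neg at hmin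
      obtain ⟨h, hne0, hnez, hconf, hMconf⟩ := hmin
      set w : Fin n → ℤ := z - h with hw
      have hwne0 : w ≠ 0 := by
        intro hw0
        apply hnez
        have := sub_eq_zero.mp hw0
        funext i
        exact (congrFun this i).symm
      -- componentwise norm additivity
      have hnorm : ∀ i, (h i).natAbs + (w i).natAbs = (z i).natAbs := by
        intro i
        have hwz : w i = z i - h i := rfl
        rcases conf_signs (hconf i).1 (hconf i).2 with ⟨h1, h2⟩ | ⟨h1, h2⟩ <;> omega
      have hsum : (∑ i, (h i).natAbs) + (∑ i, (w i).natAbs) = ∑ i, (z i).natAbs := by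
        rw [← Finset.sum_add_distrib]
        exact Finset.sum_congr rfl fun i _ => hnorm i
      have hposh : 0 < ∑ i, (h i).natAbs := by
        obtain ⟨i, hi⟩ := Function.ne_iff.mp hne0
        have : 0 < (h i).natAbs := Int.natAbs_pos.mpr (by simpa using hi)
        exact lt_of_lt_of_le this (Finset.single_le_sum
          (f := fun i => (h i).natAbs) (fun i _ => Nat.zero_le _) (Finset.mem_univ i))
      have hposw : 0 < ∑ i, (w i).natAbs := by
        obtain ⟨i, hi⟩ := Function.ne_iff.mp hwne0
        have : 0 < (w i).natAbs := Int.natAbs_pos.mpr (by simpa using hi)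
        exact lt_of_lt_of_le this (Finset.single_le_sum
          (f := fun i => (w i).natAbs) (fun i _ => Nat.zero_le _) (Finset.mem_univ i))
      -- conformality of w to z
      have hwconf : IsConformal w z := conformal_sub hconf
      have hcastw : (fun j => ((w j : ℚ))) =
          (fun j => ((z j : ℚ))) - (fun j => ((h j : ℚ))) := by
        funext j
        simp [hw]
      have hMwconf : IsConformal (M.mulVec fun j => ((w j : ℚ)))
          (M.mulVec fun j => ((z j : ℚ))) := by
        rw [hcastw, Matrix.mulVec_sub]
        exact conformal_sub hMconf
      obtain ⟨k1, α1, g1, hα1, hg1, hsum1⟩ := ih h hne0 (by omega)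
      obtain ⟨k2, α2, g2, hα2, hg2, hsum2⟩ := ih w hwne0 (by omega)
      refine ⟨k1 + k2, Fin.addCases α1 α2, Fin.addCases g1 g2, ?_, ?_, ?_⟩
      · intro ℓ
        refine Fin.addCases (motive := fun ℓ => 0 < Fin.addCases (motive := fun _ => ℕ) α1 α2 ℓ)
          ?_ ?_ ℓ
        · intro j; simpa using hα1 j
        · intro j; simpa using hα2 j
      · intro ℓ
        refine Fin.addCases (motive := fun ℓ =>
          Fin.addCases (motive := fun _ => Fin n → ℤ) g1 g2 ℓ ≠ 0 ∧
          MMinimal M (Fin.addCases (motive := fun _ => Fin n → ℤ) g1 g2 ℓ) ∧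
          IsConformal (Fin.addCases (motive := fun _ => Fin n → ℤ) g1 g2 ℓ) z ∧
          IsConformal (M.mulVec fun j =>
            ((Fin.addCases (motive := fun _ => Fin n → ℤ) g1 g2 ℓ j : ℚ)))
            (M.mulVec fun j => ((z j : ℚ)))) ?_ ?_ ℓ
        · intro j
          obtain ⟨h1, h2, h3, h4⟩ := hg1 j
          simp only [Fin.addCases_left]
          exact ⟨h1, h2, conformal_trans h3 hconf, conformal_trans h4 hMconf⟩
        · intro j
          obtain ⟨h1, h2, h3, h4⟩ := hg2 j
          simp only [Fin.addCases_right]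
          exact ⟨h1, h2, conformal_trans h3 hwconf, conformal_trans h4 hMwconf⟩
      · rw [Fin.sum_univ_add]
        simp only [Fin.addCases_left, Fin.addCases_right]
        rw [← hsum1, ← hsum2]
        simp [hw]
end

section
/- Let M be an m×n matrix with rational entries. Then there exists a finite set G of nonzero vectors in ℤ^n such that every nonzero z ∈ ℤ^n can be written as z = Σ_{g ∈ G} α_g · g with coefficients α_g ∈ ℕ, where every g with α_g ≠ 0 satisfies g ⊑ z and M·g ⊑ M·z. -/
open Matrix

section Aux

/-- sign disjunction from a nonnegative product -/
lemma mulNonnegNP {a b : ℤ} (ha : a ≤ 0) (hb : b ≤ 0) : 0 ≤ a * b := by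
  nlinarith [mul_nonneg (neg_nonneg.2 ha) (neg_nonneg.2 hb)]

lemma signDisj {a b : ℤ} (h : 0 ≤ a * b) : (0 ≤ a ∧ 0 ≤ b) ∨ (a ≤ 0 ∧ b ≤ 0) := by
  rcases le_or_gt 0 a with ha | ha
  · rcases le_or_gt 0 b with hb | hb
    · exact Or.inl ⟨ha, hb⟩
    · rcases eq_or_lt_of_le ha with h0 | ha'
      · exact Or.inr ⟨h0.ge, hb.le⟩
      · nlinarith
  · rcases le_or_gt 0 b with hb | hb
    · rcases eq_or_lt_of_le hb with h0 | hb'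
      · exact Or.inr ⟨ha.le, h0.ge⟩
      · nlinarith
    · exact Or.inr ⟨ha.le, hb.le⟩

lemma coordFacts {a b : ℤ} (h1 : 0 ≤ a * b) (h2 : |a| ≤ |b|) :
    a.natAbs ≤ b.natAbs ∧ (b - a).natAbs + a.natAbs = b.natAbs := by
  have h2' : (a.natAbs : ℤ) ≤ (b.natAbs : ℤ) := by
    rwa [Int.abs_eq_natAbs, Int.abs_eq_natAbs] at h2
  rcases signDisj h1 with ⟨ha, hb⟩ | ⟨ha, hb⟩ <;> omega

lemma confRefl {ι : Type*} (a : ι → ℤ) : IsConformal a a :=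
  fun i => ⟨mul_self_nonneg _, le_refl _⟩

lemma confTrans {ι : Type*} {a b c : ι → ℤ} (hab : IsConformal a b)
    (hbc : IsConformal b c) : IsConformal a c := by
  intro i
  obtain ⟨p1, q1⟩ := hab i
  obtain ⟨p2, q2⟩ := hbc i
  refine ⟨?_, q1.trans q2⟩
  rcases signDisj p1 with ⟨ha, hb⟩ | ⟨ha, hb⟩ <;>
    rcases signDisj p2 with ⟨hb', hc⟩ | ⟨hb', hc⟩
  · exact mul_nonneg ha hc
  · have hb0 : b i = 0 := le_antisymm hb' hb
    have : a i = 0 := by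
      rw [hb0] at q1; simpa using abs_nonpos_iff.mp (by simpa using q1)
    simp [this]
  · have hb0 : b i = 0 := le_antisymm hb hb'
    have : a i = 0 := by
      rw [hb0] at q1; simpa using abs_nonpos_iff.mp (by simpa using q1)
    simp [this]
  · exact mulNonnegNP ha hc

lemma confSub {ι : Type*} {a b : ι → ℤ} (hab : IsConformal a b) :
    IsConformal (b - a) b := by
  intro i
  obtain ⟨p1, q1⟩ := hab i
  simp only [Pi.sub_apply]
  rcases signDisj p1 with ⟨ha, hb⟩ | ⟨ha, hb⟩
  · rw [abs_of_nonneg ha, abs_of_nonneg hb] at q1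
    exact ⟨mul_nonneg (by linarith) hb,
      by rw [abs_of_nonneg (by linarith : (0:ℤ) ≤ b i - a i), abs_of_nonneg hb]; linarith⟩
  · rw [abs_of_nonpos ha, abs_of_nonpos hb] at q1
    exact ⟨mulNonnegNP (by linarith) hb,
      by rw [abs_of_nonpos (by linarith : b i - a i ≤ 0), abs_of_nonpos hb]; linarith⟩

variable {ι : Type*} [Fintype ι]

/-- the ℓ¹ norm -/
def nsum (v : ι → ℤ) : ℕ := ∑ i, (v i).natAbs

lemma nsum_eq_zero {v : ι → ℤ} (h : nsum v = 0) : v = 0 := by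
  funext i
  have := Finset.sum_eq_zero_iff.mp h i (Finset.mem_univ i)
  simpa [Int.natAbs_eq_zero] using this

lemma nsum_sub_add {a b : ι → ℤ} (h : IsConformal a b) :
    nsum (b - a) + nsum a = nsum b := by
  unfold nsum
  rw [← Finset.sum_add_distrib]
  refine Finset.sum_congr rfl fun i _ => ?_
  exact (coordFacts (h i).1 (h i).2).2

lemma nsum_pos {v : ι → ℤ} (h : v ≠ 0) : 0 < nsum v := by
  rcases Nat.eq_zero_or_pos (nsum v) with h0 | h0
  · exact absurd (nsum_eq_zero h0) h
  · exact h0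

lemma conf_of_pattern {a b : ι → ℤ} (hs : ∀ i, (0 ≤ a i) = (0 ≤ b i))
    (hn : ∀ i, (a i).natAbs ≤ (b i).natAbs) : IsConformal a b := by
  intro i
  have hs' := hs i
  have hn' := hn i
  constructor
  · by_cases h : 0 ≤ a i
    · exact mul_nonneg h (by rw [← hs']; exact h)
    · have hb : ¬ (0 ≤ b i) := by rw [← hs']; exact h
      exact mulNonnegNP (le_of_not_ge h) (le_of_not_ge hb)
  · rw [Int.abs_eq_natAbs, Int.abs_eq_natAbs]
    exact_mod_cast hn'

/-- conformal strict decrease of ℓ¹ norm -/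
lemma nsum_lt_of_conf_ne {a b : ι → ℤ} (h : IsConformal a b) (hne : a ≠ b) :
    nsum a < nsum b := by
  have key := nsum_sub_add h
  have hba : b - a ≠ 0 := fun h0 => hne (by
    have : b = a := by funext i; have := congrFun h0 i; simp at this; linarith
    exact this.symm)
  have := nsum_pos hba
  omega

/-- The set of conformally minimal elements of any set of integer vectors is finite
(Dickson's lemma). -/
lemma minimal_finite (S : Set (ι → ℤ)) :
    {v ∈ S | ∀ w ∈ S, IsConformal w v → w = v}.Finite := by
  set Min := {v ∈ S | ∀ w ∈ S, IsConformal w v → w = v} with hMin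
  classical
  -- partition by sign pattern
  have : Min ⊆ ⋃ s : ι → Bool, {v ∈ Min | ∀ i, (decide (0 ≤ v i)) = s i} := by
    intro v hv
    exact Set.mem_iUnion.mpr ⟨fun i => decide (0 ≤ v i), hv, fun i => rfl⟩
  refine Set.Finite.subset (Set.finite_iUnion fun s => ?_) this
  by_contra hinf
  obtain f := Set.Infinite.natEmbedding _ hinf
  -- consider the natAbs sequence in ℕ^ι
  have hPWO : (Set.univ : Set (ι → ℕ)).IsPWO :=
    Set.isPWO_of_wellQuasiOrderedLE _
  obtain ⟨g, hg⟩ := hPWO.exists_monotone_subseq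
    (f := fun k => fun i => (((f k : ι → ℤ)) i).natAbs) (fun _ => Set.mem_univ _)
  have h01 : (g 0 : ℕ) < g 1 := g.strictMono (by norm_num)
  have hle : ∀ i, (((f (g 0) : ι → ℤ)) i).natAbs ≤ (((f (g 1) : ι → ℤ)) i).natAbs :=
    fun i => hg (by norm_num : (0:ℕ) ≤ 1) i
  set v : ι → ℤ := (f (g 0) : ι → ℤ)
  set w : ι → ℤ := (f (g 1) : ι → ℤ)
  have hv := (f (g 0)).2
  have hw := (f (g 1)).2
  have hconf : IsConformal v w := by
    refine conf_of_pattern (fun i => ?_) (fun i => hle i)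
    have h1 : decide (0 ≤ v i) = s i := hv.2 i
    have h2 : decide (0 ≤ w i) = s i := hw.2 i
    have := h1.trans h2.symm
    exact by simpa using congrArg (fun b => b = true) this
  have heq : v = w := hw.1.2 v hv.1.1 hconf
  have : f (g 0) = f (g 1) := Subtype.ext heq
  have := f.injective this
  omega

end Aux

/-- there is a finite set `G` of nonzero integer vectors such that every
nonzero `z ∈ ℤ^n` can be written as `z = Σ_{g ∈ G} α_g • g` with `α_g ∈ ℕ`, where every
`g` with `α_g ≠ 0` satisfies `g ⊑ z` and `M·g ⊑ M·z`. -/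
theorem finite_universal_conformal_generating_set (m n : ℕ)
    (M : Matrix (Fin m) (Fin n) ℚ) :
    ∃ G : Finset (Fin n → ℤ),
      (∀ g ∈ G, g ≠ 0) ∧
      (∀ z : Fin n → ℤ, z ≠ 0 →
        ∃ α : (Fin n → ℤ) → ℕ,
          z = ∑ g ∈ G, (α g : ℤ) • g ∧
          ∀ g ∈ G, α g ≠ 0 →
            IsConformal g z ∧
            IsConformal (M.mulVec fun j => ((g j : ℚ))) (M.mulVec fun j => ((z j : ℚ)))) := by
  classical
  -- Step 1: clear denominators: integer matrix M' with (M' i j : ℚ) = N * M i j, N > 0.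
  set N : ℕ := ∏ i : Fin m, ∏ j : Fin n, (M i j).den with hN
  have hNpos : 0 < N := by
    refine Finset.prod_pos fun i _ => Finset.prod_pos fun j _ => (M i j).pos
  have hdvd : ∀ i j, (M i j).den ∣ N := fun i j =>
    dvd_trans (Finset.dvd_prod_of_mem (fun j => (M i j).den) (Finset.mem_univ j))
      (Finset.dvd_prod_of_mem (fun i => ∏ j, (M i j).den) (Finset.mem_univ i))
  set M' : Matrix (Fin m) (Fin n) ℤ :=
    fun i j => (N / (M i j).den : ℕ) * (M i j).num with hM'
  have hM'cast : ∀ i j, (M' i j : ℚ) = (N : ℚ) * M i j := by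
    intro i j
    have hd : (M i j).den ∣ N := hdvd i j
    have hden : ((M i j).den : ℚ) ≠ 0 := Nat.cast_ne_zero.mpr (M i j).den_nz
    have hq : ((M i j).num : ℚ) = M i j * ((M i j).den : ℚ) :=
      (div_eq_iff hden).mp (Rat.num_div_den _)
    have hkd : ((N / (M i j).den : ℕ) : ℚ) * ((M i j).den : ℚ) = (N : ℚ) := by
      exact_mod_cast congrArg (fun t : ℕ => (t : ℚ)) (Nat.div_mul_cancel hd)
    show ((((N / (M i j).den : ℕ) : ℤ) * (M i j).num : ℤ) : ℚ) = (N : ℚ) * M i j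
    rw [Int.cast_mul, Int.cast_natCast, hq]
    linear_combination (M i j) * hkd
  -- Step 2: the lifted map
  set φ : (Fin n → ℤ) → (Fin n ⊕ Fin m → ℤ) :=
    fun z => Sum.elim z (M'.mulVec z) with hφ
  have hφsub : ∀ a b, φ (a - b) = φ a - φ b := by
    intro a b
    funext i
    cases i with
    | inl i => simp [hφ]
    | inr i => simp [hφ, Matrix.mulVec_sub]
  have hφne : ∀ z : Fin n → ℤ, z ≠ 0 → φ z ≠ 0 := by
    intro z hz h0
    exact hz (funext fun i => by simpa [hφ] using congrFun h0 (Sum.inl i))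
  -- Step 3: minimal elements
  set S : Set (Fin n ⊕ Fin m → ℤ) := {v | ∃ z, z ≠ 0 ∧ φ z = v} with hS
  set Min : Set (Fin n ⊕ Fin m → ℤ) := {v ∈ S | ∀ w ∈ S, IsConformal w v → w = v}
    with hMinDef
  have hMinFin : Min.Finite := minimal_finite S
  set G0 : Set (Fin n → ℤ) := {z | z ≠ 0 ∧ φ z ∈ Min} with hG0
  have hφinj : Function.Injective φ := by
    intro a b hab
    funext i
    simpa [hφ] using congrFun hab (Sum.inl i)
  have hG0fin : G0.Finite := by
    have : G0 ⊆ φ ⁻¹' Min := fun z hz => hz.2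
    exact Set.Finite.subset (hMinFin.preimage (hφinj.injOn)) this
  set G : Finset (Fin n → ℤ) := hG0fin.toFinset with hG
  have hGmem : ∀ g, g ∈ G ↔ (g ≠ 0 ∧ φ g ∈ Min) := by
    intro g; rw [hG, Set.Finite.mem_toFinset]; rfl
  -- Step 4: every nonzero z has a minimal element conformally below
  have exists_min : ∀ (K : ℕ) (z : Fin n → ℤ), z ≠ 0 → nsum (φ z) < K →
      ∃ u, u ∈ G0 ∧ IsConformal (φ u) (φ z) := by
    intro K
    induction K with
    | zero => intro z hz h; omega
    | succ K ih =>
      intro z hz hlt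
      by_cases hmin : φ z ∈ Min
      · exact ⟨z, ⟨hz, hmin⟩, confRefl _⟩
      · have hzS : φ z ∈ S := ⟨z, hz, rfl⟩
        simp only [hMinDef, Set.mem_setOf_eq] at hmin
        push_neg at hmin
        obtain ⟨w, hwS, hwconf, hwne⟩ := hmin hzS
        obtain ⟨z', hz', rfl⟩ := hwS
        have hlt' : nsum (φ z') < nsum (φ z) := nsum_lt_of_conf_ne hwconf hwne
        obtain ⟨u, hu, huconf⟩ := ih z' hz' (by omega)
        exact ⟨u, hu, confTrans huconf hwconf⟩
  -- Step 5: decomposition by induction on ℓ¹ norm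
  have decomp : ∀ (K : ℕ) (z : Fin n → ℤ), z ≠ 0 → nsum (φ z) < K →
      ∃ α : (Fin n → ℤ) → ℕ,
        z = ∑ g ∈ G, (α g : ℤ) • g ∧
        ∀ g, α g ≠ 0 → g ∈ G ∧ IsConformal (φ g) (φ z) := by
    intro K
    induction K with
    | zero => intro z hz h; omega
    | succ K ih =>
      intro z hz hlt
      obtain ⟨u, huG0, huconf⟩ := exists_min (K + 1) z hz hlt
      have huG : u ∈ G := (hGmem u).mpr huG0
      by_cases hzu : z - u = 0
      · have hzu' : z = u := by
          funext i; have := congrFun hzu i; simp at this; linarith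
        refine ⟨fun g => if g = u then 1 else 0, ?_, ?_⟩
        · have hsum1 : ∀ g ∈ G, ((if g = u then (1:ℕ) else 0 : ℕ) : ℤ) • g
              = if g = u then id g else 0 := by
            intro g _; by_cases h : g = u <;> simp [h]
          rw [Finset.sum_congr rfl hsum1, Finset.sum_ite_eq' G u id, if_pos huG]
          exact hzu'
        · intro g hg
          rw [ne_eq, ite_eq_right_iff, not_forall] at hg
          obtain ⟨rfl, -⟩ := hg
          exact ⟨huG, hzu' ▸ huconf⟩
      · have hsub : φ (z - u) = φ z - φ u := hφsub z u
        have hconfsub : IsConformal (φ (z - u)) (φ z) := by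
          rw [hsub]; exact confSub huconf
        have hkey : nsum (φ z - φ u) + nsum (φ u) = nsum (φ z) := nsum_sub_add huconf
        have hupos : 0 < nsum (φ u) := nsum_pos (hφne u huG0.1)
        have hlt' : nsum (φ (z - u)) < nsum (φ z) := by rw [hsub]; omega
        obtain ⟨α', hα'sum, hα'⟩ := ih (z - u) hzu (by omega)
        refine ⟨fun g => α' g + (if g = u then 1 else 0), ?_, ?_⟩
        · have : ∑ g ∈ G, ((α' g + (if g = u then 1 else 0) : ℕ) : ℤ) • g =
              (∑ g ∈ G, (α' g : ℤ) • g) + ∑ g ∈ G, ((if g = u then 1 else 0 : ℕ) : ℤ) • g := by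
            rw [← Finset.sum_add_distrib]
            refine Finset.sum_congr rfl fun g _ => ?_
            push_cast
            rw [add_smul]
          rw [this, ← hα'sum]
          have h2 : ∑ g ∈ G, ((if g = u then 1 else 0 : ℕ) : ℤ) • g = u := by
            have hsum1 : ∀ g ∈ G, ((if g = u then (1:ℕ) else 0 : ℕ) : ℤ) • g
                = if g = u then id g else 0 := by
              intro g _; by_cases h : g = u <;> simp [h]
            rw [Finset.sum_congr rfl hsum1, Finset.sum_ite_eq' G u id, if_pos huG]
            rfl
          rw [h2]
          abel
        · intro g hg
          rcases Nat.eq_zero_or_pos (α' g) with h0 | h0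
          · have : g = u := by
              by_contra hne
              simp [h0, hne] at hg
            subst this
            exact ⟨huG, huconf⟩
          · obtain ⟨hgG, hgconf⟩ := hα' g (by omega)
            exact ⟨hgG, confTrans hgconf hconfsub⟩
  -- Step 6: translate conformality of φ into the two required statements
  have conf_transfer : ∀ g z : Fin n → ℤ, IsConformal (φ g) (φ z) →
      IsConformal g z ∧
      IsConformal (M.mulVec fun j => ((g j : ℚ))) (M.mulVec fun j => ((z j : ℚ))) := by
    intro g z h
    constructor
    · intro i
      have := h (Sum.inl i)
      simpa [hφ] using this
    · intro i
      have hi := h (Sum.inr i)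
      simp only [hφ, Sum.elim_inr] at hi
      have hcast : ∀ v : Fin n → ℤ, ((M'.mulVec v i : ℤ) : ℚ) =
          (N : ℚ) * (M.mulVec fun j => ((v j : ℚ))) i := by
        intro v
        simp only [Matrix.mulVec, dotProduct]
        push_cast
        rw [Finset.mul_sum]
        refine Finset.sum_congr rfl fun j _ => ?_
        rw [hM'cast i j]
        ring
      set A : ℚ := (M.mulVec fun j => ((g j : ℚ))) i
      set B : ℚ := (M.mulVec fun j => ((z j : ℚ))) i
      have hA : ((M'.mulVec g i : ℤ) : ℚ) = (N : ℚ) * A := hcast g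
      have hB : ((M'.mulVec z i : ℤ) : ℚ) = (N : ℚ) * B := hcast z
      have hNQ : (0 : ℚ) < (N : ℚ) := by exact_mod_cast hNpos
      obtain ⟨h1, h2⟩ := hi
      have h1' : (0 : ℚ) ≤ ((M'.mulVec g i : ℤ) : ℚ) * ((M'.mulVec z i : ℤ) : ℚ) := by
        exact_mod_cast h1
      have h2' : |((M'.mulVec g i : ℤ) : ℚ)| ≤ |((M'.mulVec z i : ℤ) : ℚ)| := by
        simpa [← Int.cast_abs] using (by exact_mod_cast h2 :
          ((|M'.mulVec g i| : ℤ) : ℚ) ≤ ((|M'.mulVec z i| : ℤ) : ℚ))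
      rw [hA, hB] at h1' h2'
      constructor
      · nlinarith [h1', mul_pos hNQ hNQ]
      · rw [abs_mul, abs_mul, abs_of_pos hNQ] at h2'
        exact le_of_mul_le_mul_left h2' hNQ
  -- Conclusion
  refine ⟨G, fun g hg => ((hGmem g).mp hg).1, fun z hz => ?_⟩
  obtain ⟨α, hsum, hα⟩ := decomp (nsum (φ z) + 1) z hz (by omega)
  refine ⟨α, hsum, fun g hg hαg => ?_⟩
  exact conf_transfer g z (hα g hαg).2
end

section
/- Let M_1, …, M_r be finitely many m×n matrices with rational entries. Then there exists a finite set G of nonzero vectors in ℤ^n such that every nonzero z ∈ ℤ^n can be written as z = Σ_{g ∈ G} α_g · g with coefficients α_g ∈ ℕ, where every g with α_g ≠ 0 satisfies g ⊑ z and M_i·g ⊑ M_i·z for every i ∈ {1,…,r}. -/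
open Matrix

section Aux

lemma confScalar {R : Type*} [CommRing R] [LinearOrder R] [IsStrictOrderedRing R] {a b : R}
    (h0 : 0 ≤ a * b) (h1 : |a| ≤ |b|) : (0 ≤ a ∧ a ≤ b) ∨ (a ≤ 0 ∧ b ≤ a) := by
  rcases le_total 0 a with ha | ha <;> rcases le_total 0 b with hb | hb
  · left; rw [abs_of_nonneg ha, abs_of_nonneg hb] at h1; exact ⟨ha, h1⟩
  · have hab : a * b = 0 := le_antisymm (mul_nonpos_of_nonneg_of_nonpos ha hb) h0
    rcases mul_eq_zero.1 hab with h | h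
    · subst h; right; exact ⟨le_refl _, hb⟩
    · subst h; left; simp only [abs_zero] at h1
      have : a = 0 := abs_nonpos_iff.1 h1
      simp [this]
  · have hab : a * b = 0 := le_antisymm (by nlinarith) h0
    rcases mul_eq_zero.1 hab with h | h
    · subst h; left; exact ⟨le_refl _, hb⟩
    · subst h; right; simp only [abs_zero] at h1
      have : a = 0 := abs_nonpos_iff.1 h1
      simp [this]
  · right; rw [abs_of_nonpos ha, abs_of_nonpos hb] at h1; exact ⟨ha, by linarith⟩

lemma confScalar' {R : Type*} [CommRing R] [LinearOrder R] [IsStrictOrderedRing R] {a b : R}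
    (h : (0 ≤ a ∧ a ≤ b) ∨ (a ≤ 0 ∧ b ≤ a)) : 0 ≤ a * b ∧ |a| ≤ |b| := by
  rcases h with ⟨h1, h2⟩ | ⟨h1, h2⟩
  · exact ⟨mul_nonneg h1 (h1.trans h2), by
      rw [abs_of_nonneg h1, abs_of_nonneg (h1.trans h2)]; exact h2⟩
  · exact ⟨by nlinarith, by
      rw [abs_of_nonpos h1, abs_of_nonpos (h2.trans h1)]; linarith⟩

lemma conf_trans {ι R : Type*} [CommRing R] [LinearOrder R] [IsStrictOrderedRing R] {a b c : ι → R}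
    (h1 : IsConformal a b) (h2 : IsConformal b c) : IsConformal a c := by
  intro i
  obtain ⟨p1, q1⟩ := h1 i; obtain ⟨p2, q2⟩ := h2 i
  refine confScalar' ?_
  rcases confScalar p1 q1 with ⟨u1, v1⟩ | ⟨u1, v1⟩ <;>
    rcases confScalar p2 q2 with ⟨u2, v2⟩ | ⟨u2, v2⟩
  · left; exact ⟨u1, v1.trans v2⟩
  · right; constructor <;> linarith
  · left; constructor <;> linarith
  · right; exact ⟨u1, v2.trans v1⟩

lemma conf_refl {ι R : Type*} [Ring R] [LinearOrder R] [IsStrictOrderedRing R] (a : ι → R) : IsConformal a a :=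
  fun _ => ⟨mul_self_nonneg _, le_refl _⟩

lemma conf_sub {ι R : Type*} [CommRing R] [LinearOrder R] [IsStrictOrderedRing R] {a b : ι → R}
    (h : IsConformal a b) : IsConformal (b - a) b := by
  intro i
  obtain ⟨p, q⟩ := h i
  refine confScalar' ?_
  rcases confScalar p q with ⟨u, v⟩ | ⟨u, v⟩
  · left; simp only [Pi.sub_apply]; constructor <;> linarith
  · right; simp only [Pi.sub_apply]; constructor <;> linarith

lemma toConfZ {a b : ℤ} (h1 : (max a 0).toNat ≤ (max b 0).toNat)
    (h2 : (max (-a) 0).toNat ≤ (max (-b) 0).toNat) : 0 ≤ a * b ∧ |a| ≤ |b| := by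
  have H1 : max a 0 ≤ max b 0 := by omega
  have H2 : max (-a) 0 ≤ max (-b) 0 := by omega
  constructor
  · rcases le_total 0 a with ha | ha <;> rcases le_total 0 b with hb | hb
    · positivity
    · have : a = 0 := by omega
      simp [this]
    · have : a = 0 := by omega
      simp [this]
    · have := mul_nonneg (neg_nonneg.2 ha) (neg_nonneg.2 hb); nlinarith
  · rw [abs_eq_max_neg, abs_eq_max_neg]; omega

lemma confEqZ {a b : ℤ} (h0 : 0 ≤ a * b) (h1 : |a| ≤ |b|) (h2 : b.natAbs ≤ a.natAbs) :
    a = b := by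
  rw [Int.abs_eq_natAbs, Int.abs_eq_natAbs] at h1
  have hn : a.natAbs = b.natAbs := by omega
  rcases Int.natAbs_eq_natAbs_iff.1 hn with h | h
  · exact h
  · have hb : b = 0 := by nlinarith
    omega

lemma den_mul_self (q : ℚ) : (q.den : ℚ) * q = q.num := by
  have h := Rat.num_div_den q
  rw [div_eq_iff (by exact_mod_cast q.den_nz)] at h
  rw [h, mul_comm]

lemma clear_den (q : ℚ) (d : ℕ) (hd : q.den ∣ d) : ∃ z : ℤ, (z : ℚ) = (d : ℚ) * q := by
  obtain ⟨c, hc⟩ := hd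
  refine ⟨q.num * c, ?_⟩
  push_cast [hc]
  rw [mul_comm (q.den : ℚ), mul_assoc, den_mul_self]
  ring

lemma conf_rat_of_int {κ : Type*} {u v : κ → ℤ} {x y : κ → ℚ} {D : ℕ} (hD : 0 < D)
    (hx : ∀ k, (u k : ℚ) = (D : ℚ) * x k) (hy : ∀ k, (v k : ℚ) = (D : ℚ) * y k)
    (h : IsConformal u v) : IsConformal x y := by
  intro k
  obtain ⟨p, q⟩ := h k
  have hDQ : (0 : ℚ) < D := by exact_mod_cast hD
  have p' : (0 : ℚ) ≤ (u k : ℚ) * (v k : ℚ) := by exact_mod_cast p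
  have q' : |(u k : ℚ)| ≤ |(v k : ℚ)| := by exact_mod_cast q
  rw [hx, hy] at p' q'
  constructor
  · nlinarith [p', mul_pos hDQ hDQ]
  · rw [abs_mul, abs_mul, abs_of_pos hDQ] at q'
    exact le_of_mul_le_mul_left q' hDQ

end Aux

/-- for finitely many `m × n` rational matrices `M_1, …, M_r`, there is a
finite set `G` of nonzero integer vectors such that every nonzero `z ∈ ℤ^n` can be written
as `z = Σ_{g ∈ G} α_g • g` with `α_g ∈ ℕ`, where every `g` with `α_g ≠ 0` satisfies
`g ⊑ z` and `M_i·g ⊑ M_i·z` for every `i`. -/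
theorem finite_universal_conformal_generating_set_simultaneous (m n r : ℕ)
    (M : Fin r → Matrix (Fin m) (Fin n) ℚ) :
    ∃ G : Finset (Fin n → ℤ),
      (∀ g ∈ G, g ≠ 0) ∧
      (∀ z : Fin n → ℤ, z ≠ 0 →
        ∃ α : (Fin n → ℤ) → ℕ,
          z = ∑ g ∈ G, (α g : ℤ) • g ∧
          ∀ g ∈ G, α g ≠ 0 →
            IsConformal g z ∧
            ∀ i : Fin r,
              IsConformal ((M i).mulVec fun j => ((g j : ℚ)))
                ((M i).mulVec fun j => ((z j : ℚ)))) := by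
  classical
  -- common denominator
  set D : ℕ := ∏ i : Fin r, ∏ k : Fin m, ∏ j : Fin n, (M i k j).den with hDdef
  have hDpos : 0 < D :=
    Finset.prod_pos fun i _ => Finset.prod_pos fun k _ => Finset.prod_pos fun j _ => (M i k j).pos
  have hdvd : ∀ i k j, (M i k j).den ∣ D := by
    intro i k j
    have h1 : (M i k j).den ∣ ∏ j', (M i k j').den :=
      Finset.dvd_prod_of_mem (fun j' => (M i k j').den) (Finset.mem_univ j)
    have h2 : (∏ j', (M i k j').den) ∣ ∏ k', ∏ j', (M i k' j').den :=
      Finset.dvd_prod_of_mem (fun k' => ∏ j', (M i k' j').den) (Finset.mem_univ k)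
    have h3 : (∏ k', ∏ j', (M i k' j').den) ∣ D :=
      Finset.dvd_prod_of_mem (fun i' => ∏ k', ∏ j', (M i' k' j').den) (Finset.mem_univ i)
    exact h1.trans (h2.trans h3)
  -- integer matrices N i with (N i k j : ℚ) = D * M i k j
  have hNex : ∀ i : Fin r, ∃ N : Matrix (Fin m) (Fin n) ℤ,
      ∀ k j, ((N k j : ℤ) : ℚ) = (D : ℚ) * M i k j := by
    intro i
    choose f hf using fun (k : Fin m) (j : Fin n) => clear_den (M i k j) D (hdvd i k j)
    exact ⟨Matrix.of f, hf⟩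
  choose N hN using hNex
  -- the integral conformality preorder
  set P : (Fin n → ℤ) → (Fin n → ℤ) → Prop := fun a b =>
    IsConformal a b ∧ ∀ i, IsConformal ((N i).mulVec a) ((N i).mulVec b) with hPdef
  have hPrefl : ∀ a, P a a := fun a => ⟨conf_refl a, fun _ => conf_refl _⟩
  have hPtrans : ∀ a b c, P a b → P b c → P a c := fun a b c h1 h2 =>
    ⟨conf_trans h1.1 h2.1, fun i => conf_trans (h1.2 i) (h2.2 i)⟩
  have hPsub : ∀ a b, P a b → P (b - a) b := by
    intro a b h
    refine ⟨conf_sub h.1, fun i => ?_⟩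
    have hmv : (N i).mulVec (b - a) = (N i).mulVec b - (N i).mulVec a :=
      Matrix.mulVec_sub _ _ _
    rw [hmv]
    exact conf_sub (h.2 i)
  -- ℓ¹ norm
  set norm1 : (Fin n → ℤ) → ℕ := fun z => ∑ j, (z j).natAbs with hnorm1
  have hnorm0 : ∀ z, norm1 z = 0 → z = 0 := by
    intro z hz
    funext j
    have := Finset.sum_eq_zero_iff.1 hz j (Finset.mem_univ j)
    simpa [Int.natAbs_eq_zero] using this
  have hlt : ∀ a b, P a b → a ≠ b → norm1 a < norm1 b := by
    intro a b h hne
    have hle : ∀ j, (a j).natAbs ≤ (b j).natAbs := by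
      intro j
      have := (h.1 j).2
      rw [Int.abs_eq_natAbs, Int.abs_eq_natAbs] at this
      exact_mod_cast this
    have hex : ∃ j, (a j).natAbs < (b j).natAbs := by
      by_contra hc
      push_neg at hc
      exact hne (funext fun j => confEqZ (h.1 j).1 (h.1 j).2 (hc j))
    obtain ⟨j0, hj0⟩ := hex
    exact Finset.sum_lt_sum (fun j _ => hle j) ⟨j0, Finset.mem_univ _, hj0⟩
  -- the set of minimal nonzero elements
  set GS : Set (Fin n → ℤ) := {g | g ≠ 0 ∧ ∀ h, h ≠ 0 → P h g → h = g} with hGSdef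
  -- finiteness via Dickson's lemma
  set F : (Fin n → ℤ) → ((Fin n ⊕ Fin r × Fin m) × Bool) → ℕ := fun g p =>
    match p with
    | (Sum.inl j, true) => (max (g j) 0).toNat
    | (Sum.inl j, false) => (max (-(g j)) 0).toNat
    | (Sum.inr (i, k), true) => (max ((N i).mulVec g k) 0).toNat
    | (Sum.inr (i, k), false) => (max (-((N i).mulVec g k)) 0).toNat
    with hFdef
  have hF : ∀ a b, F a ≤ F b → P a b := by
    intro a b h
    constructor
    · intro j
      exact toConfZ (h (Sum.inl j, true)) (h (Sum.inl j, false))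
    · intro i k
      exact toConfZ (h (Sum.inr (i, k), true)) (h (Sum.inr (i, k), false))
  have hFinj : Function.Injective F := by
    intro a b hab
    funext j
    have h1 := congrFun hab (Sum.inl j, true)
    have h2 := congrFun hab (Sum.inl j, false)
    simp only [hFdef] at h1 h2
    omega
  have hGSfin : GS.Finite := by
    have hanti : IsAntichain (· ≤ ·) (F '' GS) := by
      rintro _ ⟨a, ha, rfl⟩ _ ⟨b, hb, rfl⟩ hne hle
      exact hne (congrArg F (hb.2 a ha.1 (hF a b hle)))
    have hpwo : (F '' GS).IsPWO :=
      Set.isPWO_of_wellQuasiOrderedLE _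
    have himg : (F '' GS).Finite :=
      hanti.finite_of_partiallyWellOrderedOn hpwo
    exact Set.Finite.of_finite_image himg (hFinj.injOn)
  set Gs : Finset (Fin n → ℤ) := hGSfin.toFinset with hGsdef
  have hmemGs : ∀ g, g ∈ Gs ↔ g ∈ GS := fun g => hGSfin.mem_toFinset
  -- every nonzero vector dominates a minimal one
  have hmin : ∀ z : Fin n → ℤ, z ≠ 0 → ∃ g ∈ GS, P g z := by
    suffices H : ∀ Nb z, z ≠ 0 → norm1 z ≤ Nb → ∃ g ∈ GS, P g z from
      fun z hz => H (norm1 z) z hz le_rfl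
    intro Nb
    induction Nb with
    | zero => exact fun z hz hn => absurd (hnorm0 z (Nat.le_zero.1 hn)) hz
    | succ Nb ih =>
      intro z hz hn
      by_cases hzmin : ∀ h, h ≠ 0 → P h z → h = z
      · exact ⟨z, ⟨hz, hzmin⟩, hPrefl z⟩
      · push_neg at hzmin
        obtain ⟨h, hh0, hPh, hne⟩ := hzmin
        have hle : norm1 h ≤ Nb := by have := hlt h z hPh hne; omega
        obtain ⟨g, hg, hPg⟩ := ih h hh0 hle
        exact ⟨g, hg, hPtrans g h z hPg hPh⟩
  -- the decomposition
  have key : ∀ Nb (z : Fin n → ℤ), z ≠ 0 → norm1 z ≤ Nb →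
      ∃ α : (Fin n → ℤ) → ℕ, z = ∑ g ∈ Gs, (α g : ℤ) • g ∧
        ∀ g ∈ Gs, α g ≠ 0 → P g z := by
    intro Nb
    induction Nb with
    | zero => exact fun z hz hn => absurd (hnorm0 z (Nat.le_zero.1 hn)) hz
    | succ Nb ih =>
      intro z hz hn
      obtain ⟨g, hgGS, hPgz⟩ := hmin z hz
      have hg0 : g ≠ 0 := hgGS.1
      have hgGs : g ∈ Gs := (hmemGs g).2 hgGS
      by_cases hz' : z - g = 0
      · have hzg : z = g := by rwa [sub_eq_zero] at hz'
        refine ⟨fun h => if h = g then 1 else 0, ?_, ?_⟩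
        · simp only [apply_ite (Nat.cast : ℕ → ℤ), Nat.cast_one, Nat.cast_zero, ite_smul,
            one_smul, zero_smul]
          rw [Finset.sum_ite_eq' Gs g (fun h => h), if_pos hgGs, hzg]
        · intro h hh hα
          have hhg : h = g := by by_contra hc; simp [hc] at hα
          subst hhg
          exact hPgz
      · have hPz'z : P (z - g) z := hPsub g z hPgz
        have hne : z - g ≠ z := fun hh => hg0 (sub_eq_self.1 hh)
        have hnz' : norm1 (z - g) ≤ Nb := by have := hlt _ _ hPz'z hne; omega
        obtain ⟨α', hsum', hcond'⟩ := ih (z - g) hz' hnz'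
        refine ⟨fun h => α' h + (if h = g then 1 else 0), ?_, ?_⟩
        · have hcastα : ∀ h : Fin n → ℤ,
              ((α' h + if h = g then 1 else 0 : ℕ) : ℤ)
                = (α' h : ℤ) + (if h = g then (1 : ℤ) else 0) := by
            intro h; split <;> push_cast <;> ring
          rw [Finset.sum_congr rfl fun h _ => by rw [hcastα h, add_smul]]
          rw [Finset.sum_add_distrib, ← hsum']
          have hsg : ∑ h ∈ Gs, (if h = g then (1 : ℤ) else 0) • h = g := by
            simp only [ite_smul, one_smul, zero_smul]
            rw [Finset.sum_ite_eq' Gs g (fun h => h), if_pos hgGs]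
          rw [hsg, sub_add_cancel]
        · intro h hh hα
          by_cases hc : h = g
          · subst hc; exact hPgz
          · have hα' : α' h ≠ 0 := by simpa [hc] using hα
            exact hPtrans _ _ _ (hcond' h hh hα') hPz'z
  -- the cast identity for mulVec
  have hcast : ∀ (i : Fin r) (g : Fin n → ℤ) (k : Fin m),
      (((N i).mulVec g) k : ℚ) = (D : ℚ) * ((M i).mulVec (fun j => (g j : ℚ)) k) := by
    intro i g k
    simp only [Matrix.mulVec, dotProduct]
    push_cast
    rw [Finset.mul_sum]
    refine Finset.sum_congr rfl fun j _ => ?_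
    rw [hN i k j]; ring
  -- assemble
  refine ⟨Gs, ?_, ?_⟩
  · intro g hg
    exact ((hmemGs g).1 hg).1
  · intro z hz
    obtain ⟨α, hsum, hcond⟩ := key (norm1 z) z hz le_rfl
    refine ⟨α, hsum, ?_⟩
    intro g hg hα
    obtain ⟨h1, h2⟩ := hcond g hg hα
    refine ⟨h1, fun i => ?_⟩
    exact conf_rat_of_int hDpos (hcast i g) (hcast i z) (h2 i)
end

section
/- Let B be an invertible m×m integer matrix, A^I an m×n_I integer matrix, and b ∈ ℤ^m. Let x₁, x₂ ∈ ℤ^{n_I} satisfy x₁ ≥ 0, x₂ ≥ 0, B⁻¹(b − A^I x₁) ≥ 0 and B⁻¹(b − A^I x₂) ≥ 0 componentwise. Suppose (g_k)_{k ∈ K} is a finite family of vectors in ℤ^{n_I} and (α_k)_{k ∈ K} are positive integers with Σ_k α_k g_k = x₂ − x₁, such that for every k, g_k ⊑ x₂ − x₁ and B⁻¹A^I g_k ⊑ B⁻¹A^I (x₂ − x₁). Then for every k ∈ K, the point x₁ + g_k is again feasible, i.e. x₁ + g_k ≥ 0 and B⁻¹(b − A^I(x₁ + g_k)) ≥ 0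 componentwise. -/
open Matrix

/-- Cast an integer vector to a rational vector. -/
def qv {n : ℕ} (v : Fin n → ℤ) : Fin n → ℚ := fun i => (v i : ℚ)

/-- The inverse (over `ℚ`) of an integer square matrix. -/
noncomputable def ratInv {m : ℕ} (B : Matrix (Fin m) (Fin m) ℤ) : Matrix (Fin m) (Fin m) ℚ :=
  (B.map ((↑) : ℤ → ℚ))⁻¹

/-- Feasibility of the integer part `x` for the Mixed Integer Restricted Program with
basis `B`: `x ≥ 0` and the basic real part `B⁻¹(b − Aᴵ x)` is `≥ 0`. -/
noncomputable def MirpFeasible {m nI : ℕ} (B : Matrix (Fin m) (Fin m) ℤ)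
    (AI : Matrix (Fin m) (Fin nI) ℤ) (b : Fin m → ℤ) (x : Fin nI → ℤ) : Prop :=
  0 ≤ x ∧ 0 ≤ (ratInv B).mulVec (qv b - (AI.map ((↑) : ℤ → ℚ)).mulVec (qv x))

/-- Scalar key lemma: if `a` is conformal to `b` in one coordinate and both `x`
and `x + b` are nonnegative, then so is `x + a`. -/
lemma conformal_key {R : Type*} [CommRing R] [LinearOrder R] [IsStrictOrderedRing R] {a b x : R}
    (h1 : 0 ≤ a * b) (h2 : |a| ≤ |b|) (hx : 0 ≤ x) (hxb : 0 ≤ x + b) : 0 ≤ x + a := by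
  rcases le_or_gt 0 a with h | h
  · linarith
  · have hb : b ≤ 0 := by
      by_contra hb
      push_neg at hb
      exact absurd h1 (not_le.mpr (mul_neg_of_neg_of_pos h hb))
    rw [abs_of_neg h, abs_of_nonpos hb] at h2
    linarith

/-- if `x₁, x₂` are feasible for the restricted program and
`x₂ − x₁ = Σ α_k g_k` is a conformal decomposition (each `g_k ⊑ x₂ − x₁` and
`B⁻¹Aᴵ g_k ⊑ B⁻¹Aᴵ (x₂ − x₁)`, with positive integer coefficients), then each
`x₁ + g_k` is again feasible. -/
theorem conformal_summands_preserve_feasibility (m nI : ℕ)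
    (B : Matrix (Fin m) (Fin m) ℤ) (AI : Matrix (Fin m) (Fin nI) ℤ) (b : Fin m → ℤ)
    (hB : IsUnit (B.map ((↑) : ℤ → ℚ)).det)
    (x₁ x₂ : Fin nI → ℤ)
    (hx₁ : MirpFeasible B AI b x₁) (hx₂ : MirpFeasible B AI b x₂)
    (k : ℕ) (g : Fin k → (Fin nI → ℤ)) (α : Fin k → ℕ)
    (hα : ∀ l, 0 < α l)
    (hsum : ∑ l, (α l : ℤ) • g l = x₂ - x₁)
    (hconf : ∀ l, IsConformal (g l) (x₂ - x₁))
    (hconfM : ∀ l,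
      IsConformal ((ratInv B * AI.map ((↑) : ℤ → ℚ)).mulVec (qv (g l)))
        ((ratInv B * AI.map ((↑) : ℤ → ℚ)).mulVec (qv (x₂ - x₁)))) :
    ∀ l, MirpFeasible B AI b (x₁ + g l) := by
  intro l
  obtain ⟨hx₁0, hx₁b⟩ := hx₁
  obtain ⟨hx₂0, hx₂b⟩ := hx₂
  set Aq := AI.map ((↑) : ℤ → ℚ) with hAq
  set R := ratInv B with hR
  constructor
  · -- integer part nonneg
    intro i
    have h := (hconf l) i
    have := conformal_key h.1 h.2 (hx₁0 i) (by
      have : 0 ≤ x₂ i := hx₂0 i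
      simpa using this)
    simpa using this
  · -- basic part nonneg
    have hq1 : qv (x₁ + g l) = qv x₁ + qv (g l) := by
      funext i; simp [qv]
    have hq2 : qv (x₂ - x₁) = qv x₂ - qv x₁ := by
      funext i; simp [qv]
    have e1 : R.mulVec (qv b - Aq.mulVec (qv (x₁ + g l)))
        = R.mulVec (qv b - Aq.mulVec (qv x₁)) - (R * Aq).mulVec (qv (g l)) := by
      rw [hq1, Matrix.mulVec_add, ← Matrix.mulVec_mulVec, ← Matrix.mulVec_sub]
      congr 1
      abel
    have e2 : (R * Aq).mulVec (qv (x₂ - x₁))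
        = R.mulVec (qv b - Aq.mulVec (qv x₁)) - R.mulVec (qv b - Aq.mulVec (qv x₂)) := by
      rw [hq2, ← Matrix.mulVec_sub, ← Matrix.mulVec_mulVec, Matrix.mulVec_sub]
      congr 1
      abel
    rw [e1]
    intro i
    have h := (hconfM l) i
    have hkey := conformal_key (a := -((R * Aq).mulVec (qv (g l)) i))
      (b := -((R * Aq).mulVec (qv (x₂ - x₁)) i))
      (x := R.mulVec (qv b - Aq.mulVec (qv x₁)) i)
      (by simpa using h.1) (by simpa using h.2)
      (hx₁b i)
      (by
        have h2 : (0:ℚ) ≤ R.mulVec (qv b - Aq.mulVec (qv x₂)) i := by simpa using hx₂b i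
        rw [e2]
        simp only [Pi.sub_apply]
        linarith)
    simpa [sub_eq_add_neg] using hkey
end

section
/- Let B be an invertible m×m integer matrix and A^I an m×n_I integer matrix. Then there exists a finite set G of nonzero vectors in ℤ^{n_I} such that for every right-hand side b ∈ ℤ^m, every objective (c_B, c^I) ∈ ℚ^m × ℚ^{n_I}, and every feasible x ∈ ℤ^{n_I} of the restricted program (x ≥ 0 and B⁻¹(b − A^I x) ≥ 0) that is not optimal (i.e. there exists a feasible y ∈ ℤ^{n_I} with c_B·B⁻¹(b − A^I y) + c^I·y < c_B·B⁻¹(b − A^I x) + c^I·x), there exists g ∈ G such that x + g is feasible and c_B·B⁻¹(b − A^I(x + g)) + c^I·(x + g) < c_B·B⁻¹(b − A^I x) + c^I·x. -/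
open Matrix

/-- Objective value `c_B ⬝ B⁻¹(b − Aᴵ x) + cᴵ ⬝ x` of the integer part `x` of a solution
of the Mixed Integer Restricted Program. -/
noncomputable def MirpObj {m nI : ℕ} (B : Matrix (Fin m) (Fin m) ℤ)
    (AI : Matrix (Fin m) (Fin nI) ℤ) (b : Fin m → ℤ) (cB : Fin m → ℚ) (cI : Fin nI → ℚ)
    (x : Fin nI → ℤ) : ℚ :=
  cB ⬝ᵥ (ratInv B).mulVec (qv b - (AI.map ((↑) : ℤ → ℚ)).mulVec (qv x)) + cI ⬝ᵥ qv x

namespace MirpAux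

/-- The conformal (sign-compatible) order on `ℤ`: `a` lies between `0` and `b`. -/
def conf (a b : ℤ) : Prop := (0 ≤ a ∧ a ≤ b) ∨ (b ≤ a ∧ a ≤ 0)

lemma conf_refl (a : ℤ) : conf a a := by unfold conf; omega

lemma conf_trans {a b c : ℤ} (h1 : conf a b) (h2 : conf b c) : conf a c := by
  unfold conf at *; omega

lemma conf_sub {a b : ℤ} (h : conf a b) : conf (b - a) b := by
  unfold conf at *; omega

lemma conf_natAbs_add {a b : ℤ} (h : conf a b) :
    a.natAbs + (b - a).natAbs = b.natAbs := by
  unfold conf at h; omega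

lemma conf_natAbs_lt {a b : ℤ} (h : conf a b) (hne : a ≠ b) : a.natAbs < b.natAbs := by
  unfold conf at h; omega

lemma conf_iff_toNat {a b : ℤ} :
    conf a b ↔ a.toNat ≤ b.toNat ∧ (-a).toNat ≤ (-b).toNat := by
  unfold conf; omega

variable {m nI : ℕ}

/-- Pairs `(z, w)`; in the lattice we will have `w = M z`. -/
abbrev Pair (nI m : ℕ) := (Fin nI → ℤ) × (Fin m → ℤ)

/-- Conformal order on pairs, componentwise. -/
def Conf (u v : Pair nI m) : Prop :=
  (∀ i, conf (u.1 i) (v.1 i)) ∧ ∀ j, conf (u.2 j) (v.2 j)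

lemma Conf_refl (u : Pair nI m) : Conf u u := ⟨fun i => conf_refl _, fun j => conf_refl _⟩

lemma Conf_trans {u v w : Pair nI m} (h1 : Conf u v) (h2 : Conf v w) : Conf u w :=
  ⟨fun i => conf_trans (h1.1 i) (h2.1 i), fun j => conf_trans (h1.2 j) (h2.2 j)⟩

lemma Conf_sub {u v : Pair nI m} (h : Conf u v) : Conf (v - u) v :=
  ⟨fun i => conf_sub (h.1 i), fun j => conf_sub (h.2 j)⟩

/-- ℓ¹ norm of a pair. -/
def N (u : Pair nI m) : ℕ := (∑ i, (u.1 i).natAbs) + ∑ j, (u.2 j).natAbs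

lemma N_eq_zero {u : Pair nI m} (h : N u = 0) : u = 0 := by
  unfold N at h
  have h1 : ∀ i, (u.1 i).natAbs = 0 := by
    intro i
    have := Finset.sum_eq_zero_iff.mp (by omega : (∑ i, (u.1 i).natAbs) = 0)
    exact this i (Finset.mem_univ i)
  have h2 : ∀ j, (u.2 j).natAbs = 0 := by
    intro j
    have := Finset.sum_eq_zero_iff.mp (by omega : (∑ j, (u.2 j).natAbs) = 0)
    exact this j (Finset.mem_univ j)
  ext t
  · exact Int.natAbs_eq_zero.mp (h1 t)
  · exact Int.natAbs_eq_zero.mp (h2 t)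

lemma N_add_of_conf {u v : Pair nI m} (h : Conf u v) : N u + N (v - u) = N v := by
  unfold N
  have h1 : ∀ i, (u.1 i).natAbs + (v.1 i - u.1 i).natAbs = (v.1 i).natAbs :=
    fun i => conf_natAbs_add (h.1 i)
  have h2 : ∀ j, (u.2 j).natAbs + (v.2 j - u.2 j).natAbs = (v.2 j).natAbs :=
    fun j => conf_natAbs_add (h.2 j)
  have e1 : (∑ i, (u.1 i).natAbs) + (∑ i, ((v - u).1 i).natAbs) = ∑ i, (v.1 i).natAbs := by
    rw [← Finset.sum_add_distrib]
    exact Finset.sum_congr rfl fun i _ => h1 i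
  have e2 : (∑ j, (u.2 j).natAbs) + (∑ j, ((v - u).2 j).natAbs) = ∑ j, (v.2 j).natAbs := by
    rw [← Finset.sum_add_distrib]
    exact Finset.sum_congr rfl fun j _ => h2 j
  omega

lemma N_lt_of_conf_ne {u v : Pair nI m} (h : Conf u v) (hne : u ≠ v) : N u < N v := by
  have hvu : v - u ≠ 0 := fun hz => hne (by
    have : v = u := by rwa [sub_eq_zero] at hz
    exact this.symm)
  have := N_add_of_conf h
  have hNz : N (v - u) ≠ 0 := fun h0 => hvu (N_eq_zero h0)
  omega

/-- The lattice attached to an integer matrix `M`. -/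
def L (M : Matrix (Fin m) (Fin nI) ℤ) : Set (Pair nI m) :=
  {p | p.2 = M.mulVec p.1}

lemma L_sub {M : Matrix (Fin m) (Fin nI) ℤ} {u v : Pair nI m}
    (hu : u ∈ L M) (hv : v ∈ L M) : u - v ∈ L M := by
  simp only [L, Set.mem_setOf_eq] at *
  show u.2 - v.2 = M.mulVec (u.1 - v.1)
  rw [Matrix.mulVec_sub, hu, hv]

/-- Minimal nonzero lattice elements w.r.t. the conformal order (Graver basis). -/
def minSet (M : Matrix (Fin m) (Fin nI) ℤ) : Set (Pair nI m) :=
  {p | p ∈ L M ∧ p ≠ 0 ∧ ∀ w ∈ L M, w ≠ 0 → Conf w p → w = p}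

/-- Encoding of pairs into tuples of naturals, turning `Conf` into `≤`. -/
def enc (p : Pair nI m) : (Fin nI ⊕ Fin m) × Bool → ℕ := fun q =>
  match q with
  | (Sum.inl i, true) => (p.1 i).toNat
  | (Sum.inl i, false) => (-(p.1 i)).toNat
  | (Sum.inr j, true) => (p.2 j).toNat
  | (Sum.inr j, false) => (-(p.2 j)).toNat

lemma conf_of_enc_le {p q : Pair nI m} (h : enc p ≤ enc q) : Conf p q := by
  constructor
  · intro i
    exact conf_iff_toNat.mpr ⟨h (Sum.inl i, true), h (Sum.inl i, false)⟩
  · intro j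
    exact conf_iff_toNat.mpr ⟨h (Sum.inr j, true), h (Sum.inr j, false)⟩

lemma minSet_finite (M : Matrix (Fin m) (Fin nI) ℤ) : (minSet M).Finite := by
  by_contra hinf
  have hinf' : (minSet M).Infinite := hinf
  obtain f := hinf'.natEmbedding
  have hpwo : (Set.univ : Set ((Fin nI ⊕ Fin m) × Bool → ℕ)).IsPWO :=
    Set.isPWO_univ_iff.mpr inferInstance
  obtain ⟨a, b, hab, hle⟩ := Set.PartiallyWellOrderedOn.exists_lt hpwo (f := fun n => enc ((f n) : Pair nI m))
    (fun n => Set.mem_univ _)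
  have hconf : Conf ((f a) : Pair nI m) ((f b) : Pair nI m) := conf_of_enc_le hle
  have hfa := (f a).2
  have hfb := (f b).2
  have heq : ((f a) : Pair nI m) = ((f b) : Pair nI m) :=
    hfb.2.2 _ hfa.1 hfa.2.1 hconf
  have : f a = f b := Subtype.ext heq
  exact absurd (f.injective this) (Nat.ne_of_lt hab)

lemma exists_minimal_conf (M : Matrix (Fin m) (Fin nI) ℤ) :
    ∀ (n : ℕ) (z : Pair nI m), N z ≤ n → z ∈ L M → z ≠ 0 →
      ∃ g ∈ minSet M, Conf g z := by
  intro n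
  induction n using Nat.strong_induction_on with
  | _ n ih =>
    intro z hNz hzL hz0
    by_cases hmin : ∀ w ∈ L M, w ≠ 0 → Conf w z → w = z
    · exact ⟨z, ⟨hzL, hz0, hmin⟩, Conf_refl z⟩
    · push_neg at hmin
      obtain ⟨w, hwL, hw0, hwc, hwne⟩ := hmin
      have hlt : N w < N z := N_lt_of_conf_ne hwc hwne
      have hNzpos : 0 < N z := by
        rcases Nat.eq_zero_or_pos (N z) with h | h
        · exact absurd (N_eq_zero h) hz0
        · exact h
      obtain ⟨g, hg, hgc⟩ := ih (N w) (by omega) w le_rfl hwL hw0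
      exact ⟨g, hg, Conf_trans hgc hwc⟩

lemma conformal_decomposition (M : Matrix (Fin m) (Fin nI) ℤ) :
    ∀ (n : ℕ) (z : Pair nI m), N z ≤ n → z ∈ L M →
      ∃ l : List (Pair nI m), (∀ g ∈ l, g ∈ minSet M ∧ Conf g z) ∧ l.sum = z := by
  intro n
  induction n using Nat.strong_induction_on with
  | _ n ih =>
    intro z hNz hzL
    by_cases hz0 : z = 0
    · exact ⟨[], by simp, by simp [hz0]⟩
    · obtain ⟨g, hg, hgc⟩ := exists_minimal_conf M n z hNz hzL hz0
      have hg0 : g ≠ 0 := hg.2.1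
      have hzg : z - g ∈ L M := L_sub hzL hg.1
      have hconf' : Conf (z - g) z := Conf_sub hgc
      have hNsplit := N_add_of_conf hgc
      have hNg : N g ≠ 0 := fun h0 => hg0 (N_eq_zero h0)
      have hlt : N (z - g) < N z := by omega
      obtain ⟨l', hl', hsum'⟩ := ih (N (z - g)) (by omega) (z - g) le_rfl hzg
      refine ⟨g :: l', ?_, ?_⟩
      · intro p hp
        rcases List.mem_cons.mp hp with h | h
        · exact ⟨h ▸ hg, h ▸ hgc⟩
        · exact ⟨(hl' p h).1, Conf_trans (hl' p h).2 hconf'⟩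
      · simp [hsum']

lemma qv_mulVec {a b : ℕ} (P : Matrix (Fin a) (Fin b) ℤ) (v : Fin b → ℤ) :
    qv (P.mulVec v) = (P.map ((↑) : ℤ → ℚ)).mulVec (qv v) := by
  funext i
  simp only [qv, Matrix.mulVec, dotProduct, Matrix.map_apply]
  push_cast
  rfl

lemma qv_add {a : ℕ} (u v : Fin a → ℤ) : qv (u + v) = qv u + qv v := by
  funext i; simp [qv]

lemma qv_zero {a : ℕ} : qv (0 : Fin a → ℤ) = 0 := by
  funext i; simp [qv]

end MirpAux

namespace MirpAux

lemma ratInv_mulVec_eq {m nI : ℕ} (B : Matrix (Fin m) (Fin m) ℤ)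
    (AI : Matrix (Fin m) (Fin nI) ℤ) (v : Fin nI → ℤ) :
    (ratInv B).mulVec ((AI.map ((↑) : ℤ → ℚ)).mulVec (qv v)) =
      ((B.map ((↑) : ℤ → ℚ)).det)⁻¹ • qv ((B.adjugate * AI).mulVec v) := by
  have hadj : (B.map ((↑) : ℤ → ℚ)).adjugate = B.adjugate.map ((↑) : ℤ → ℚ) := by
    have h := (Int.castRingHom ℚ).map_adjugate B
    simpa [RingHom.mapMatrix_apply] using h.symm
  have hmul : (B.adjugate.map ((↑) : ℤ → ℚ)) * (AI.map ((↑) : ℤ → ℚ)) =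
      (B.adjugate * AI).map ((↑) : ℤ → ℚ) := by
    simpa using (Matrix.map_mul (L := B.adjugate) (M := AI) (f := Int.castRingHom ℚ)).symm
  rw [ratInv, Matrix.inv_def, Ring.inverse_eq_inv, hadj, Matrix.smul_mulVec,
    Matrix.mulVec_mulVec, hmul, ← qv_mulVec]

lemma rvec_shift {m nI : ℕ} (B : Matrix (Fin m) (Fin m) ℤ)
    (AI : Matrix (Fin m) (Fin nI) ℤ) (b : Fin m → ℤ) (x v : Fin nI → ℤ) :
    (ratInv B).mulVec (qv b - (AI.map ((↑) : ℤ → ℚ)).mulVec (qv (x + v))) =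
    (ratInv B).mulVec (qv b - (AI.map ((↑) : ℤ → ℚ)).mulVec (qv x))
      - ((B.map ((↑) : ℤ → ℚ)).det)⁻¹ • qv ((B.adjugate * AI).mulVec v) := by
  rw [qv_add, Matrix.mulVec_add, sub_add_eq_sub_sub, Matrix.mulVec_sub,
    ratInv_mulVec_eq B AI v]

end MirpAux

open MirpAux in
lemma MirpObj_shift {m nI : ℕ} (B : Matrix (Fin m) (Fin m) ℤ)
    (AI : Matrix (Fin m) (Fin nI) ℤ) (b : Fin m → ℤ) (cB : Fin m → ℚ) (cI : Fin nI → ℚ)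
    (x v : Fin nI → ℤ) :
    MirpObj B AI b cB cI (x + v) = MirpObj B AI b cB cI x +
      (cI ⬝ᵥ qv v -
        cB ⬝ᵥ (((B.map ((↑) : ℤ → ℚ)).det)⁻¹ • qv ((B.adjugate * AI).mulVec v))) := by
  unfold MirpObj
  rw [rvec_shift B AI b x v, qv_add, dotProduct_sub, dotProduct_add]
  ring

open MirpAux in
/-- there is a finite set `G` of nonzero integer vectors, independent of the
right-hand side and objective, which is a universal test set for the Mixed Integer
Restricted Program: every feasible non-optimal `x` admits `g ∈ G` with `x + g` feasible
and strictly improving. -/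
theorem finite_universal_test_set_for_mirp (m nI : ℕ)
    (B : Matrix (Fin m) (Fin m) ℤ) (AI : Matrix (Fin m) (Fin nI) ℤ)
    (hB : IsUnit (B.map ((↑) : ℤ → ℚ)).det) :
    ∃ G : Finset (Fin nI → ℤ),
      (∀ g ∈ G, g ≠ 0) ∧
      ∀ (b : Fin m → ℤ) (cB : Fin m → ℚ) (cI : Fin nI → ℚ) (x : Fin nI → ℤ),
        MirpFeasible B AI b x →
        (∃ y : Fin nI → ℤ, MirpFeasible B AI b y ∧
          MirpObj B AI b cB cI y < MirpObj B AI b cB cI x) →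
        ∃ g ∈ G, MirpFeasible B AI b (x + g) ∧
          MirpObj B AI b cB cI (x + g) < MirpObj B AI b cB cI x := by
  classical
  set d : ℚ := (B.map ((↑) : ℤ → ℚ)).det with hd
  have hd0 : d ≠ 0 := hB.ne_zero
  set M : Matrix (Fin m) (Fin nI) ℤ := B.adjugate * AI with hMdef
  refine ⟨(minSet_finite M).toFinset.image Prod.fst, ?_, ?_⟩
  · intro g hg
    simp only [Finset.mem_image, Set.Finite.mem_toFinset] at hg
    obtain ⟨p, hp, rfl⟩ := hg
    intro h0
    apply hp.2.1
    have h2 : p.2 = 0 := by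
      have := hp.1
      simp only [L, Set.mem_setOf_eq] at this
      rw [this, h0, Matrix.mulVec_zero]
    cases p
    simp_all
  · rintro b cB cI x hx ⟨y, hy, hlt⟩
    have hyx : y ≠ x := by rintro rfl; exact lt_irrefl _ hlt
    set z1 : Fin nI → ℤ := y - x with hz1
    set z : Pair nI m := (z1, M.mulVec z1) with hzdef
    have hzL : z ∈ L M := rfl
    have hz0 : z ≠ 0 := by
      intro h
      apply hyx
      have h1 : z1 = 0 := congrArg Prod.fst h
      rw [hz1, sub_eq_zero] at h1
      exact h1
    obtain ⟨l, hl, hsum⟩ := conformal_decomposition M (N z) z le_rfl hzL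
    set Fv : (Fin nI → ℤ) → ℚ :=
      fun v => cI ⬝ᵥ qv v - cB ⬝ᵥ (d⁻¹ • qv (M.mulVec v)) with hFv
    have hshift : ∀ (x' v : Fin nI → ℤ),
        MirpObj B AI b cB cI (x' + v) = MirpObj B AI b cB cI x' + Fv v :=
      fun x' v => MirpObj_shift B AI b cB cI x' v
    have hxz : x + z1 = y := by rw [hz1]; abel
    have hFz : Fv z1 < 0 := by
      have h := hshift x z1
      rw [hxz] at h
      linarith
    have hFadd : ∀ a c : Fin nI → ℤ, Fv (a + c) = Fv a + Fv c := by
      intro a c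
      simp only [hFv, Matrix.mulVec_add, qv_add, smul_add, dotProduct_add]
      ring
    have hF0 : Fv 0 = 0 := by
      simp [hFv, qv_zero, Matrix.mulVec_zero]
    have hFsum : ∀ t : List (Pair nI m),
        Fv t.sum.1 = (t.map (fun g => Fv g.1)).sum := by
      intro t
      induction t with
      | nil => simpa using hF0
      | cons a s ihl => simp [List.sum_cons, Prod.fst_add, hFadd, ihl]
    obtain ⟨g, hgl, hgneg⟩ : ∃ g ∈ l, Fv g.1 < 0 := by
      by_contra hcon
      push_neg at hcon
      have hnn : 0 ≤ (l.map (fun g => Fv g.1)).sum := by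
        apply List.sum_nonneg
        intro q hq
        obtain ⟨p, hp, rfl⟩ := List.mem_map.mp hq
        exact hcon p hp
      rw [← hFsum, hsum] at hnn
      exact absurd hFz (not_lt.mpr hnn)
    have hgmin := (hl g hgl).1
    have hgconf := (hl g hgl).2
    have hgL : g.2 = M.mulVec g.1 := hgmin.1
    refine ⟨g.1, ?_, ⟨?_, ?_⟩, ?_⟩
    · simp only [Finset.mem_image, Set.Finite.mem_toFinset]
      exact ⟨g, hgmin, rfl⟩
    · -- 0 ≤ x + g.1
      rw [Pi.le_def]
      intro i
      have hc := hgconf.1 i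
      have hxi : (0 : ℤ) ≤ x i := hx.1 i
      have hyi : (0 : ℤ) ≤ y i := hy.1 i
      have hz1i : z.1 i = y i - x i := rfl
      simp only [Pi.add_apply, Pi.zero_apply]
      unfold conf at hc
      omega
    · -- second feasibility component
      rw [rvec_shift B AI b x g.1, ← hMdef, ← hd, Pi.le_def]
      intro j
      have hry' := hy.2
      rw [← hxz, rvec_shift B AI b x z1, ← hMdef, ← hd, Pi.le_def] at hry'
      have hry := hry' j
      have hrx := hx.2 j
      have hc := hgconf.2 j
      rw [hgL] at hc
      have hcz : (M.mulVec z1) j = z.2 j := rfl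
      simp only [Pi.sub_apply, Pi.smul_apply, Pi.zero_apply, smul_eq_mul] at hry ⊢
      set rx : ℚ := (ratInv B).mulVec (qv b - (AI.map ((↑) : ℤ → ℚ)).mulVec (qv x)) j with hrxdef
      have hrx0 : (0 : ℚ) ≤ rx := hrx
      set s : ℚ := qv (M.mulVec g.1) j with hsq
      set t : ℚ := qv (M.mulVec z1) j with htq
      have hcq : ((0 : ℚ) ≤ s ∧ s ≤ t) ∨ (t ≤ s ∧ s ≤ 0) := by
        unfold conf at hc
        rw [hsq, htq]
        simp only [qv]
        rcases hc with ⟨h1, h2⟩ | ⟨h1, h2⟩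
        · exact Or.inl ⟨by exact_mod_cast h1, by exact_mod_cast h2⟩
        · exact Or.inr ⟨by exact_mod_cast h1, by exact_mod_cast h2⟩
      rcases hd0.lt_or_gt with hdneg | hdpos
      · have hi : d⁻¹ < 0 := inv_neg''.mpr hdneg
        rcases hcq with ⟨h1, h2⟩ | ⟨h1, h2⟩
        · nlinarith
        · have : d⁻¹ * s ≤ d⁻¹ * t := mul_le_mul_of_nonpos_left h1 hi.le
          linarith
      · have hi : 0 < d⁻¹ := inv_pos.mpr hdpos
        rcases hcq with ⟨h1, h2⟩ | ⟨h1, h2⟩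
        · have : d⁻¹ * s ≤ d⁻¹ * t := mul_le_mul_of_nonneg_left h2 hi.le
          linarith
        · nlinarith
    · -- strict improvement
      have h := hshift x g.1
      rw [h]
      linarith
end

section
/- Let A^R be an m×n_R integer matrix of rank m and A^I an m×n_I integer matrix. For u ∈ ℤ^{n_I} let P_u = {x ∈ ℝ^{n_R} : A^R x = −A^I u, x ≥ 0}. Let z, z' ∈ ℤ^{n_I} satisfy z' ⊑ z, and suppose that for every choice of m columns of A^R forming an invertible m×m matrix B, one has B⁻¹A^I z' ⊑ B⁻¹A^I z. Then P_z equals the Minkowski sum P_{z'} + P_{z−z'}. -/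
open Matrix Pointwise

/-- The polyhedron `P_u = {x ∈ ℝ^{nR} : Aᴿ x = −Aᴵ u, x ≥ 0}` associated with an integer
vector `u ∈ ℤ^{nI}`. -/
def polyP {m nR nI : ℕ} (AR : Matrix (Fin m) (Fin nR) ℤ) (AI : Matrix (Fin m) (Fin nI) ℤ)
    (u : Fin nI → ℤ) : Set (Fin nR → ℝ) :=
  {x | (AR.map ((↑) : ℤ → ℝ)).mulVec x
        = -((AI.map ((↑) : ℤ → ℝ)).mulVec fun j => ((u j : ℝ))) ∧ 0 ≤ x}


section Helpers

variable {m nR : ℕ}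

/-- spread a vector on the image of σ -/
def spread {α : Type*} [AddCommMonoid α] (σ : Fin m → Fin nR) (v : Fin m → α) :
    Fin nR → α := fun k => ∑ j, if k = σ j then v j else 0

lemma spread_apply {α : Type*} [AddCommMonoid α] {σ : Fin m → Fin nR}
    (hσ : Function.Injective σ) (v : Fin m → α) (j : Fin m) :
    spread σ v (σ j) = v j := by
  unfold spread
  rw [Finset.sum_eq_single j]
  · simp
  · intro j' _ hj'
    simp only [ite_eq_right_iff]
    intro h
    exact absurd (hσ h.symm) hj'
  · simp

lemma spread_apply_notin {α : Type*} [AddCommMonoid α] {σ : Fin m → Fin nR}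
    (v : Fin m → α) {k : Fin nR} (hk : k ∉ Set.range σ) :
    spread σ v k = 0 := by
  unfold spread
  apply Finset.sum_eq_zero
  intro j _
  rw [if_neg]
  rintro rfl
  exact hk ⟨j, rfl⟩

lemma mulVec_spread {R : Type*} [CommRing R] (A : Matrix (Fin m) (Fin nR) R)
    (σ : Fin m → Fin nR) (v : Fin m → R) :
    A.mulVec (spread σ v) = (A.submatrix id σ).mulVec v := by
  funext i
  simp only [mulVec, dotProduct, spread, submatrix_apply, id_eq, Finset.mul_sum]
  rw [Finset.sum_comm]
  congr 1
  funext j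
  rw [Finset.sum_eq_single (σ j)] <;> simp +contextual

lemma mulVec_comp_support {R : Type*} [CommRing R] (A : Matrix (Fin m) (Fin nR) R)
    {σ : Fin m → Fin nR} (hσ : Function.Injective σ) {x : Fin nR → R}
    (hx : ∀ k, k ∉ Set.range σ → x k = 0) :
    (A.submatrix id σ).mulVec (x ∘ σ) = A.mulVec x := by
  funext i
  simp only [mulVec, dotProduct, submatrix_apply, id_eq, Function.comp_apply]
  classical
  rw [← Finset.sum_image (s := Finset.univ) (g := σ) (f := fun k => A i k * x k)
    (by intro a _ b _ h; exact hσ h)]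
  apply Finset.sum_subset (Finset.subset_univ _)
  intro k _ hk
  rw [hx k, mul_zero]
  simp only [Finset.mem_image, Finset.mem_univ, true_and] at hk
  rintro ⟨j, rfl⟩
  exact hk ⟨j, rfl⟩

lemma quotient_bounds {c' c : ℚ} (hc : 0 ≤ c) (hsign : 0 ≤ c' * c) (habs : |c'| ≤ |c|) :
    0 ≤ c' ∧ c' ≤ c := by
  rcases eq_or_lt_of_le hc with h | h
  · rw [← h] at habs ⊢
    rw [abs_zero, abs_nonpos_iff] at habs
    simp [habs]
  · have h1 : 0 ≤ c' := nonneg_of_mul_nonneg_right (by rwa [mul_comm] at hsign) h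
    rw [abs_of_nonneg h1, abs_of_nonneg hc] at habs
    exact ⟨h1, habs⟩

lemma key_induction (A : Matrix (Fin m) (Fin nR) ℝ) (b b' : Fin m → ℝ)
    (hext : ∀ s : Finset (Fin nR), LinearIndependent ℝ (fun k : s => Aᵀ k) →
      ∃ σ : Fin m → Fin nR, Function.Injective σ ∧ (∀ k ∈ s, k ∈ Set.range σ) ∧
        IsUnit (A.submatrix id σ))
    (hbasic : ∀ σ : Fin m → Fin nR, Function.Injective σ → IsUnit (A.submatrix id σ) →
      ∀ y : Fin m → ℝ, 0 ≤ y → (A.submatrix id σ).mulVec y = b →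
      ∃ y', 0 ≤ y' ∧ y' ≤ y ∧ (A.submatrix id σ).mulVec y' = b') :
    ∀ x : Fin nR → ℝ, A.mulVec x = b → 0 ≤ x →
      ∃ x', A.mulVec x' = b' ∧ 0 ≤ x' ∧ x' ≤ x := by
  classical
  suffices H : ∀ n (x : Fin nR → ℝ), (Finset.univ.filter (fun k => x k ≠ 0)).card ≤ n →
      A.mulVec x = b → 0 ≤ x → ∃ x', A.mulVec x' = b' ∧ 0 ≤ x' ∧ x' ≤ x by
    exact fun x hAx hx => H _ x le_rfl hAx hx
  intro n
  induction n using Nat.strong_induction_on with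
  | _ n IH =>
  intro x hcard hAx hx
  set s : Finset (Fin nR) := Finset.univ.filter (fun k => x k ≠ 0) with hs
  by_cases hind : LinearIndependent ℝ (fun k : s => Aᵀ k)
  · -- independent support columns: basic solution case
    obtain ⟨σ, hσinj, hσs, hσunit⟩ := hext s hind
    have hsupp : ∀ k, k ∉ Set.range σ → x k = 0 := by
      intro k hk
      by_contra hxk
      exact hk (hσs k (by simp [hs, hxk]))
    have hy0 : (0:Fin m → ℝ) ≤ x ∘ σ := fun j => hx (σ j)
    have hyb : (A.submatrix id σ).mulVec (x ∘ σ) = b := by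
      rw [mulVec_comp_support A hσinj hsupp, hAx]
    obtain ⟨y', hy'0, hy'le, hy'b⟩ := hbasic σ hσinj hσunit (x ∘ σ) hy0 hyb
    refine ⟨spread σ y', ?_, ?_, ?_⟩
    · rw [mulVec_spread, hy'b]
    · intro k
      rcases em (k ∈ Set.range σ) with ⟨j, rfl⟩ | hk
      · rw [spread_apply hσinj]; exact hy'0 j
      · rw [spread_apply_notin _ hk]
        exact le_rfl
    · intro k
      rcases em (k ∈ Set.range σ) with ⟨j, rfl⟩ | hk
      · rw [spread_apply hσinj]; exact hy'le j
      · rw [spread_apply_notin _ hk]; exact hx k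
  · -- dependent support columns: reduce support
    rw [Fintype.not_linearIndependent_iff] at hind
    obtain ⟨g, hgsum, i₀, hgi₀⟩ := hind
    set yv : Fin nR → ℝ := fun k => if hk : k ∈ s then g ⟨k, hk⟩ else 0 with hyv
    have hyvs : ∀ k, k ∉ s → yv k = 0 := by intro k hk; simp [hyv, hk]
    have hAyv : A.mulVec yv = 0 := by
      funext i
      simp only [mulVec, dotProduct, Pi.zero_apply]
      rw [← Finset.sum_subset (Finset.subset_univ s)
        (by intro k _ hk; rw [hyvs k hk, mul_zero])]
      rw [← Finset.sum_attach s (fun k => A i k * yv k)]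
      have := congrFun hgsum i
      rw [Finset.sum_apply] at this
      simp only [Pi.smul_apply, smul_eq_mul, transpose_apply, Pi.zero_apply] at this
      rw [← this]
      apply Finset.sum_congr rfl
      intro k _
      rw [hyv]
      simp only [k.2, dif_pos]
      ring
    have hyvne : yv (i₀ : Fin nR) ≠ 0 := by
      rw [hyv]; simpa [i₀.2] using hgi₀
    -- choose direction d with a negative entry
    obtain ⟨d, hAd, hds, hdneg⟩ : ∃ d : Fin nR → ℝ, A.mulVec d = 0 ∧
        (∀ k, k ∉ s → d k = 0) ∧ ∃ k, d k < 0 := by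
      rcases lt_or_gt_of_ne hyvne with h | h
      · exact ⟨yv, hAyv, hyvs, ⟨i₀, h⟩⟩
      · refine ⟨-yv, ?_, ?_, ⟨i₀, ?_⟩⟩
        · rw [mulVec_neg, hAyv, neg_zero]
        · intro k hk; simp [hyvs k hk]
        · simpa using h
    -- the subroutine: one-sided reduction
    have reduce : ∀ d : Fin nR → ℝ, A.mulVec d = 0 → (∀ k, k ∉ s → d k = 0) →
        (∃ k, d k < 0) →
        ∃ t : ℝ, 0 < t ∧ 0 ≤ x + t • d ∧
          (Finset.univ.filter (fun k => (x + t • d) k ≠ 0)).card < s.card := by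
      intro d hAd hds hdneg
      set T : Finset (Fin nR) := Finset.univ.filter (fun k => d k < 0) with hT
      have hTne : T.Nonempty := by
        obtain ⟨k, hk⟩ := hdneg
        exact ⟨k, by simp [hT, hk]⟩
      obtain ⟨k₀, hk₀T, hk₀min⟩ := T.exists_min_image (fun k => x k / (-d k)) hTne
      have hdk₀ : d k₀ < 0 := by simpa [hT] using hk₀T
      have hk₀s : k₀ ∈ s := by
        by_contra h
        rw [hds k₀ h] at hdk₀
        exact lt_irrefl 0 hdk₀
      have hxk₀ne : x k₀ ≠ 0 := by simpa [hs] using hk₀s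
      have hxk₀ : 0 < x k₀ := lt_of_le_of_ne (hx k₀) (Ne.symm hxk₀ne)
      set t : ℝ := x k₀ / (-d k₀) with ht
      have htpos : 0 < t := div_pos hxk₀ (by linarith)
      refine ⟨t, htpos, ?_, ?_⟩
      · intro k
        simp only [Pi.add_apply, Pi.smul_apply, smul_eq_mul, Pi.zero_apply]
        rcases le_or_gt 0 (d k) with h | h
        · have h0 : (0:ℝ) ≤ x k := hx k
          nlinarith
        · have hkT : k ∈ T := by simp [hT, h]
          have hmin := hk₀min k hkT
          rw [le_div_iff₀ (by linarith : (0:ℝ) < -d k)] at hmin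
          linarith
      · apply Finset.card_lt_card
        rw [Finset.ssubset_def]
        constructor
        · apply Finset.subset_iff.mpr
          intro k hk
          rw [hs]
          simp only [Finset.mem_filter, Finset.mem_univ, true_and] at hk ⊢
          intro hxk
          apply hk
          rw [Pi.add_apply, hxk, Pi.smul_apply, smul_eq_mul,
            hds k (by simp [hs, hxk]), mul_zero, add_zero]
        · intro hsub
          have hk₀mem : k₀ ∈ s := hk₀s
          have := hsub hk₀mem
          simp only [Finset.mem_filter, Finset.mem_univ, true_and] at this
          apply this
          rw [Pi.add_apply, Pi.smul_apply, smul_eq_mul, ht]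
          have hne : d k₀ ≠ 0 := ne_of_lt hdk₀
          have hcancel : x k₀ / -d k₀ * d k₀ = -x k₀ := by
            rw [div_mul_eq_mul_div, div_neg, mul_div_assoc, div_self hne, mul_one]
          rw [hcancel]
          ring
    -- now apply the reduction, in one or two directions
    by_cases hpos : ∃ k, 0 < d k
    · -- two-sided reduction and convex combination
      have hAd' : A.mulVec (-d) = 0 := by rw [mulVec_neg, hAd, neg_zero]
      have hds' : ∀ k, k ∉ s → (-d) k = 0 := fun k hk => by simp [hds k hk]
      have hdneg' : ∃ k, (-d) k < 0 := by
        obtain ⟨k, hk⟩ := hpos; exact ⟨k, by simpa using hk⟩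
      obtain ⟨t, htpos, hu0, hucard⟩ := reduce d hAd hds hdneg
      obtain ⟨t', ht'pos, hw0, hwcard⟩ := reduce (-d) hAd' hds' hdneg'
      set u : Fin nR → ℝ := x + t • d with hu
      set w : Fin nR → ℝ := x + t' • (-d) with hw
      have hAu : A.mulVec u = b := by
        rw [hu, mulVec_add, mulVec_smul, hAd, smul_zero, add_zero, hAx]
      have hAw : A.mulVec w = b := by
        rw [hw, mulVec_add, mulVec_smul, hAd', smul_zero, add_zero, hAx]
      obtain ⟨xu, hxub, hxu0, hxule⟩ :=
        IH _ (lt_of_lt_of_le hucard hcard) u le_rfl hAu hu0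
      obtain ⟨xw, hxwb, hxw0, hxwle⟩ :=
        IH _ (lt_of_lt_of_le hwcard hcard) w le_rfl hAw hw0
      have hsum : 0 < t + t' := by linarith
      set lam : ℝ := t' / (t + t') with hlam
      have hlam0 : 0 ≤ lam := le_of_lt (div_pos ht'pos hsum)
      have hlam1 : lam ≤ 1 := by
        rw [hlam, div_le_one hsum]; linarith
      have hkey : lam * t - (1 - lam) * t' = 0 := by
        rw [hlam]; field_simp; ring
      refine ⟨lam • xu + (1 - lam) • xw, ?_, ?_, ?_⟩
      · rw [mulVec_add, mulVec_smul, mulVec_smul, hxub, hxwb, ← add_smul]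
        norm_num
      · intro k
        have h1 := hxu0 k
        have h2 := hxw0 k
        simp only [Pi.add_apply, Pi.smul_apply, smul_eq_mul, Pi.zero_apply] at h1 h2 ⊢
        nlinarith
      · intro k
        have h1 := hxule k
        have h2 := hxwle k
        simp only [hu, hw, Pi.add_apply, Pi.smul_apply, smul_eq_mul, Pi.neg_apply,
          mul_neg] at h1 h2
        simp only [Pi.add_apply, Pi.smul_apply, smul_eq_mul]
        have e : (lam * t - (1 - lam) * t') * d k = 0 := by rw [hkey, zero_mul]
        nlinarith [mul_le_mul_of_nonneg_left h1 hlam0,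
          mul_le_mul_of_nonneg_left h2 (by linarith : (0:ℝ) ≤ 1 - lam), e]
    · -- one-sided reduction
      push_neg at hpos
      obtain ⟨t, htpos, hu0, hucard⟩ := reduce d hAd hds hdneg
      set u : Fin nR → ℝ := x + t • d with hu
      have hAu : A.mulVec u = b := by
        rw [hu, mulVec_add, mulVec_smul, hAd, smul_zero, add_zero, hAx]
      obtain ⟨xu, hxub, hxu0, hxule⟩ :=
        IH _ (lt_of_lt_of_le hucard hcard) u le_rfl hAu hu0
      refine ⟨xu, hxub, hxu0, ?_⟩
      intro k
      have h1 := hxule k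
      have h2 := hpos k
      simp only [hu, Pi.add_apply, Pi.smul_apply, smul_eq_mul] at h1
      nlinarith

lemma extend_basis (A : Matrix (Fin m) (Fin nR) ℝ)
    (hspan : ⊤ ≤ Submodule.span ℝ (Set.range (fun k => Aᵀ k)))
    (s : Finset (Fin nR)) (hs : LinearIndependent ℝ (fun k : s => Aᵀ k)) :
    ∃ σ : Fin m → Fin nR, Function.Injective σ ∧ (∀ k ∈ s, k ∈ Set.range σ) ∧
      IsUnit (A.submatrix id σ) := by
  classical
  set col : Fin nR → (Fin m → ℝ) := fun k => Aᵀ k with hcol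
  have hInjOn : Set.InjOn col ↑s := by
    intro a ha b hb hab
    have h := hs.injective (a₁ := ⟨a, Finset.mem_coe.mp ha⟩) (a₂ := ⟨b, Finset.mem_coe.mp hb⟩)
      (by exact hab)
    exact congrArg Subtype.val h
  have himg : LinearIndependent ℝ ((↑) : (col '' ↑s) → (Fin m → ℝ)) :=
    LinearIndepOn.id_image (v := col) (s := (↑s : Set (Fin nR))) hs
  obtain ⟨bset, hbt, hsb, htb, hbli⟩ :=
    exists_linearIndepOn_id_extension himg (Set.image_subset_range col ↑s)
  replace hbli : LinearIndependent ℝ ((↑) : bset → (Fin m → ℝ)) := hbli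
  have hbspan : ⊤ ≤ Submodule.span ℝ bset :=
    le_trans hspan (Submodule.span_le.mpr htb)
  have hbfin : bset.Finite := hbli.setFinite
  have : Fintype bset := hbfin.fintype
  -- bset is a basis of ℝ^m
  have hbtop : Submodule.span ℝ (Set.range ((↑) : bset → (Fin m → ℝ))) = ⊤ := by
    rw [Subtype.range_coe]
    exact le_antisymm le_top hbspan
  let B : Module.Basis bset ℝ (Fin m → ℝ) := Module.Basis.mk hbli (by rw [hbtop])
  have hcard : Fintype.card bset = m := by
    have := Module.finrank_eq_card_basis B
    simpa [Module.finrank_fintype_fun_eq_card] using this.symm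
  let e : Fin m ≃ bset := (Fintype.equivFinOfCardEq hcard).symm
  -- choose preimages, preferring indices in s
  have hpre : ∀ w : bset, ∃ k : Fin nR, col k = (w : Fin m → ℝ) ∧
      ((w : Fin m → ℝ) ∈ col '' ↑s → k ∈ s) := by
    intro w
    by_cases hw : (w : Fin m → ℝ) ∈ col '' ↑s
    · obtain ⟨k, hk, hkw⟩ := hw
      exact ⟨k, hkw, fun _ => hk⟩
    · obtain ⟨k, hkw⟩ := hbt w.2
      exact ⟨k, hkw, fun h => absurd h hw⟩
  choose p hp1 hp2 using hpre
  have hpinj : Function.Injective p := by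
    intro w1 w2 h
    apply Subtype.ext
    rw [← hp1 w1, ← hp1 w2, h]
  refine ⟨fun j => p (e j), ?_, ?_, ?_⟩
  · exact hpinj.comp (Equiv.injective e)
  · intro k hk
    have hkmem : col k ∈ bset := hsb ⟨k, hk, rfl⟩
    refine ⟨e.symm ⟨col k, hkmem⟩, ?_⟩
    simp only [Equiv.apply_symm_apply]
    have h2 := hp2 ⟨col k, hkmem⟩ ⟨k, hk, rfl⟩
    exact hInjOn (by exact_mod_cast h2) hk (hp1 ⟨col k, hkmem⟩)
  · rw [← Matrix.linearIndependent_cols_iff_isUnit]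
    have hcols : ∀ j, (A.submatrix id (fun j => p (e j)))ᵀ j = ((e j : Fin m → ℝ)) := by
      intro j
      funext i
      have := congrFun (hp1 (e j)) i
      simpa [hcol] using this
    have : LinearIndependent ℝ (fun j => ((e j : _) : Fin m → ℝ)) :=
      hbli.comp e (Equiv.injective e)
    exact (show (A.submatrix id fun j => p (e j)).col = fun j => ((e j : _) : Fin m → ℝ) from
      funext hcols) ▸ this

lemma cast_mulVec {a b : ℕ} (M : Matrix (Fin a) (Fin b) ℚ) (v : Fin b → ℚ) :
    (M.map ((↑) : ℚ → ℝ)).mulVec (fun j => ((v j : ℝ))) = fun i => ((M.mulVec v i : ℝ)) := by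
  funext i
  simp only [mulVec, dotProduct, map_apply]
  push_cast
  try rfl

lemma int_map_eq {a b : ℕ} (M : Matrix (Fin a) (Fin b) ℤ) :
    M.map ((↑) : ℤ → ℝ) = (M.map ((↑) : ℤ → ℚ)).map ((↑) : ℚ → ℝ) := by
  rw [Matrix.map_map]
  congr 1

lemma mulVec_mem_span (M : Matrix (Fin m) (Fin nR) ℝ) (w : Fin nR → ℝ) :
    M.mulVec w ∈ Submodule.span ℝ (Set.range fun k => Mᵀ k) := by
  have h : M.mulVec w = ∑ k, w k • Mᵀ k := by
    funext i
    simp [mulVec, dotProduct, Finset.sum_apply, mul_comm]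
  rw [h]
  exact Submodule.sum_mem _ fun k _ =>
    Submodule.smul_mem _ _ (Submodule.subset_span ⟨k, rfl⟩)


end Helpers

/-- Hemmecke's lemma: if `z' ⊑ z` and `B⁻¹Aᴵ z' ⊑ B⁻¹Aᴵ z` for every basis
`B` of `Aᴿ` (i.e. every invertible `m × m` matrix formed by `m` columns of `Aᴿ`), then
`P_z` is the Minkowski sum `P_{z'} + P_{z − z'}`. -/
theorem minkowski_decomposition_of_conformal_pair (m nR nI : ℕ)
    (AR : Matrix (Fin m) (Fin nR) ℤ) (AI : Matrix (Fin m) (Fin nI) ℤ)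
    (hrank : (AR.map ((↑) : ℤ → ℚ)).rank = m)
    (z z' : Fin nI → ℤ)
    (hconf : IsConformal z' z)
    (hbases : ∀ σ : Fin m → Fin nR, Function.Injective σ →
      ((AR.map ((↑) : ℤ → ℚ)).submatrix id σ).det ≠ 0 →
      IsConformal
        ((((AR.map ((↑) : ℤ → ℚ)).submatrix id σ)⁻¹ * AI.map ((↑) : ℤ → ℚ)).mulVec (qv z'))
        ((((AR.map ((↑) : ℤ → ℚ)).submatrix id σ)⁻¹ * AI.map ((↑) : ℤ → ℚ)).mulVec (qv z))) :
    polyP AR AI z = polyP AR AI z' + polyP AR AI (z - z') := by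
  classical
  have hz_cast : ∀ (w : Fin nI → ℤ), (fun j => ((qv w j : ℝ))) = fun j => ((w j : ℝ)) := by
    intro w
    funext j
    simp [qv]
  set Aq : Matrix (Fin m) (Fin nR) ℚ := AR.map ((↑) : ℤ → ℚ) with hAq
  have hArq : AR.map ((↑) : ℤ → ℝ) = Aq.map ((↑) : ℚ → ℝ) := int_map_eq AR
  have hAIrq : AI.map ((↑) : ℤ → ℝ) = (AI.map ((↑) : ℤ → ℚ)).map ((↑) : ℚ → ℝ) := int_map_eq AI
  -- abbreviations (plain, no folding games)
  let Ar : Matrix (Fin m) (Fin nR) ℝ := AR.map ((↑) : ℤ → ℝ)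
  let AIq : Matrix (Fin m) (Fin nI) ℚ := AI.map ((↑) : ℤ → ℚ)
  let bz : Fin m → ℝ := -((AI.map ((↑) : ℤ → ℝ)).mulVec fun j => ((z j : ℝ)))
  let bz' : Fin m → ℝ := -((AI.map ((↑) : ℤ → ℝ)).mulVec fun j => ((z' j : ℝ)))
  let bd : Fin m → ℝ := -((AI.map ((↑) : ℤ → ℝ)).mulVec fun j => (((z - z') j : ℝ)))
  have hbsplit : bd = bz - bz' := by
    show -((AI.map ((↑) : ℤ → ℝ)).mulVec fun j => (((z - z') j : ℝ)))
        = -((AI.map ((↑) : ℤ → ℝ)).mulVec fun j => ((z j : ℝ)))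
          - -((AI.map ((↑) : ℤ → ℝ)).mulVec fun j => ((z' j : ℝ)))
    have hv : (fun j => (((z - z') j : ℝ))) =
        (fun j => ((z j : ℝ))) - (fun j => ((z' j : ℝ))) := by
      funext j
      simp only [Pi.sub_apply, Pi.sub_apply]
      push_cast
      ring
    rw [hv, mulVec_sub]
    abel
  -- cast of a rational mulVec identity to ℝ
  have cast_bvec : ∀ (w : Fin nI → ℤ),
      (fun i => (((AIq.mulVec (qv w)) i : ℝ)))
        = (AI.map ((↑) : ℤ → ℝ)).mulVec fun j => ((w j : ℝ)) := by
    intro w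
    rw [hAIrq, ← hz_cast w, cast_mulVec]
  -- spanning of the columns of Ar
  have hsurj : Function.Surjective Aq.mulVecLin := by
    rw [← LinearMap.range_eq_top]
    apply Submodule.eq_top_of_finrank_eq
    rw [show Module.finrank ℚ (LinearMap.range Aq.mulVecLin) = Aq.rank from rfl, hrank,
      Module.finrank_fintype_fun_eq_card, Fintype.card_fin]
  have hspan : ⊤ ≤ Submodule.span ℝ (Set.range fun k => Arᵀ k) := by
    rw [← (Pi.basisFun ℝ (Fin m)).span_eq]
    apply Submodule.span_le.mpr
    rintro _ ⟨i, rfl⟩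
    obtain ⟨v, hv⟩ := hsurj (Pi.single i 1)
    rw [Matrix.mulVecLin_apply] at hv
    have hcast : Ar.mulVec (fun k => ((v k : ℝ))) = Pi.basisFun ℝ (Fin m) i := by
      show (AR.map ((↑) : ℤ → ℝ)).mulVec _ = _
      rw [hArq, cast_mulVec Aq v, hv]
      funext j
      rw [Pi.basisFun_apply]
      rcases eq_or_ne j i with rfl | hji
      · simp
      · simp [Pi.single_apply, hji, Ne.symm hji]
    rw [← hcast]
    exact mulVec_mem_span Ar _
  -- the basic-solution step, via the rational hypothesis
  have hbasic : ∀ σ : Fin m → Fin nR, Function.Injective σ → IsUnit (Ar.submatrix id σ) →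
      ∀ y : Fin m → ℝ, 0 ≤ y → (Ar.submatrix id σ).mulVec y = bz →
      ∃ y', 0 ≤ y' ∧ y' ≤ y ∧ (Ar.submatrix id σ).mulVec y' = bz' := by
    intro σ hσinj hσunit y hy0 hyb
    set Bq : Matrix (Fin m) (Fin m) ℚ := Aq.submatrix id σ with hBq
    have hBrq : Ar.submatrix id σ = Bq.map ((↑) : ℚ → ℝ) := by
      show (AR.map ((↑) : ℤ → ℝ)).submatrix id σ = _
      rw [hArq, hBq, Matrix.submatrix_map]
    have hdetr : (Ar.submatrix id σ).det ≠ 0 :=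
      IsUnit.ne_zero ((Matrix.isUnit_iff_isUnit_det _).mp hσunit)
    have hdmap : ((Bq.det : ℝ)) = (Bq.map ((↑) : ℚ → ℝ)).det := by
      have h := RingHom.map_det (Rat.castHom ℝ) Bq
      simpa using h
    have hdetq : Bq.det ≠ 0 := by
      intro h
      apply hdetr
      rw [hBrq, ← hdmap, h]
      simp
    have hdetu : IsUnit Bq.det := isUnit_iff_ne_zero.mpr hdetq
    have hconfB := hbases σ hσinj hdetq
    set c : Fin m → ℚ := -((Bq⁻¹ * AIq).mulVec (qv z)) with hc
    set c' : Fin m → ℚ := -((Bq⁻¹ * AIq).mulVec (qv z')) with hc'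
    have hBc : Bq.mulVec c = -(AIq.mulVec (qv z)) := by
      rw [hc, mulVec_neg, Matrix.mulVec_mulVec, ← Matrix.mul_assoc,
        Matrix.mul_nonsing_inv _ hdetu, Matrix.one_mul]
    have hBc' : Bq.mulVec c' = -(AIq.mulVec (qv z')) := by
      rw [hc', mulVec_neg, Matrix.mulVec_mulVec, ← Matrix.mul_assoc,
        Matrix.mul_nonsing_inv _ hdetu, Matrix.one_mul]
    have hcastc : (Ar.submatrix id σ).mulVec (fun j => ((c j : ℝ))) = bz := by
      rw [hBrq, cast_mulVec Bq c]
      show _ = -((AI.map ((↑) : ℤ → ℝ)).mulVec fun j => ((z j : ℝ)))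
      rw [← cast_bvec z]
      funext i
      rw [hBc]
      simp
    have hcastc' : (Ar.submatrix id σ).mulVec (fun j => ((c' j : ℝ))) = bz' := by
      rw [hBrq, cast_mulVec Bq c']
      show _ = -((AI.map ((↑) : ℤ → ℝ)).mulVec fun j => ((z' j : ℝ)))
      rw [← cast_bvec z']
      funext i
      rw [hBc']
      simp
    have hinj : Function.Injective (Ar.submatrix id σ).mulVec :=
      (Matrix.mulVec_injective_iff_isUnit).mpr hσunit
    have hya : y = fun j => ((c j : ℝ)) := hinj (by rw [hyb, hcastc])
    have hbounds : ∀ j, 0 ≤ c' j ∧ c' j ≤ c j := by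
      intro j
      have hcj : (0:ℚ) ≤ c j := by
        have h0 : (0:ℝ) ≤ y j := hy0 j
        rw [hya] at h0
        exact_mod_cast show (0:ℝ) ≤ ((c j : ℝ)) from h0
      have h1 := (hconfB j).1
      have h2 := (hconfB j).2
      refine quotient_bounds hcj ?_ ?_
      · have hcc : c' j * c j = ((Bq⁻¹ * AIq).mulVec (qv z')) j * ((Bq⁻¹ * AIq).mulVec (qv z)) j := by
          rw [hc, hc']
          simp only [Pi.neg_apply]
          ring
        rw [hcc]
        exact h1
      · have ha : |c' j| = |((Bq⁻¹ * AIq).mulVec (qv z')) j| := by rw [hc']; simp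
        have hb : |c j| = |((Bq⁻¹ * AIq).mulVec (qv z)) j| := by rw [hc]; simp
        rw [ha, hb]
        exact h2
    refine ⟨fun j => ((c' j : ℝ)), ?_, ?_, hcastc'⟩
    · intro j
      show (0:ℝ) ≤ ((c' j : ℝ))
      exact_mod_cast (hbounds j).1
    · intro j
      show ((c' j : ℝ)) ≤ y j
      rw [hya]
      show ((c' j : ℝ)) ≤ ((c j : ℝ))
      exact_mod_cast (hbounds j).2
  -- main decomposition
  apply Set.Subset.antisymm
  · intro x hx
    simp only [polyP, Set.mem_setOf_eq] at hx
    obtain ⟨hAx, hx0⟩ := hx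
    have hAx' : Ar.mulVec x = bz := hAx
    obtain ⟨x', hb', hx'0, hx'le⟩ :=
      key_induction Ar bz bz' (fun s hs => extend_basis Ar hspan s hs) hbasic x hAx' hx0
    rw [Set.mem_add]
    refine ⟨x', ?_, x - x', ?_, by abel⟩
    · simp only [polyP, Set.mem_setOf_eq]
      exact ⟨hb', hx'0⟩
    · simp only [polyP, Set.mem_setOf_eq]
      constructor
      · show Ar.mulVec (x - x') = bd
        rw [mulVec_sub, hAx', hb', hbsplit]
      · intro k
        have := hx'le k
        simp only [Pi.sub_apply, Pi.zero_apply]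
        have h0 := hx'le k
        linarith
  · intro x hx
    rw [Set.mem_add] at hx
    obtain ⟨x1, hx1, x2, hx2, rfl⟩ := hx
    simp only [polyP, Set.mem_setOf_eq] at hx1 hx2 ⊢
    obtain ⟨h1, h10⟩ := hx1
    obtain ⟨h2, h20⟩ := hx2
    constructor
    · have h1' : Ar.mulVec x1 = bz' := h1
      have h2' : Ar.mulVec x2 = bd := h2
      show Ar.mulVec (x1 + x2) = bz
      rw [mulVec_add, h1', h2', hbsplit]
      funext i
      simp only [Pi.add_apply, Pi.sub_apply]
      ring
    · intro k
      have := h10 k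
      have := h20 k
      simp only [Pi.add_apply, Pi.zero_apply] at *
      linarith
end
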